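/- arXiv:cs/0404050 — 2 statements merged into one kernel-verified Lean document; each statement's English description precedes it below -/
import Mathlib

section
/- Characterization lemma: Let P = ⟨Σ, C, R⟩ be a program with C strongly regular and well-typed, and let [σ] = (σ_t, [σ_d]) be a valuation over the term model M_P(V) represented by a substitution σ = (σ_t, σ_d) with σ_d mapping data variables to partial data terms over X. Then for all e, a, b ∈ Expr_{Σ⊥}(X) and all t ∈ Term_{Σ⊥}(X): (a) [t] ∈ ⟦e⟧^{M_P(V)}[σ_d] if and only if eσ_d →_P t; (b) (M_P(V), [σ_d]) ⊨ e → t if and only if eσ_d →_P tσ_d; (c) (M_P(V), [σ_d]) ⊨ a == b if and only if aσ_d ==_P bσ_d. -/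
namespace ACRWL

/-- Partial expressions: data variables, bottom, data constructor applications
and defined function applications (symbols named by natural numbers). -/
inductive Expr : Type where
  | var : ℕ → Expr
  | bot : Expr
  | con : ℕ → List Expr → Expr
  | fn  : ℕ → List Expr → Expr

namespace Expr

/-- Occurrence of a data variable in an expression. -/
inductive Occurs (x : ℕ) : Expr → Prop where
  | var : Occurs x (var x)
  | con {c : ℕ} {es : List Expr} {e : Expr} : e ∈ es → Occurs x e → Occurs x (con c es)
  | fn {f : ℕ} {es : List Expr} {e : Expr} : e ∈ es → Occurs x e → Occurs x (fn f es)

/-- Partial data terms: built from variables, ⊥ and data constructors only. -/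
inductive IsTerm : Expr → Prop where
  | var (x : ℕ) : IsTerm (var x)
  | bot : IsTerm bot
  | con {c : ℕ} {es : List Expr} : (∀ e ∈ es, IsTerm e) → IsTerm (con c es)

/-- Total expressions: no occurrence of ⊥. -/
inductive NoBot : Expr → Prop where
  | var (x : ℕ) : NoBot (var x)
  | con {c : ℕ} {es : List Expr} : (∀ e ∈ es, NoBot e) → NoBot (con c es)
  | fn {f : ℕ} {es : List Expr} : (∀ e ∈ es, NoBot e) → NoBot (fn f es)

/-- Total data terms. -/
def IsTotalTerm (e : Expr) : Prop := IsTerm e ∧ NoBot e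

/-- Application of a data substitution. -/
def subst (σ : ℕ → Expr) : Expr → Expr
  | var x => σ x
  | bot => bot
  | con c es => con c (es.attach.map fun e => subst σ e.1)
  | fn f es => fn f (es.attach.map fun e => subst σ e.1)
termination_by e => sizeOf e
decreasing_by
  all_goals (simp only [Expr.con.sizeOf_spec, Expr.fn.sizeOf_spec]; have := List.sizeOf_lt_of_mem e.2; omega)

/-- Number of occurrences of the variable `x`. -/
def varCount (x : ℕ) : Expr → ℕ
  | var y => if y = x then 1 else 0
  | bot => 0
  | con _ es => (es.attach.map fun e => varCount x e.1).sum
  | fn _ es => (es.attach.map fun e => varCount x e.1).sum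
termination_by e => sizeOf e
decreasing_by
  all_goals (simp only [Expr.con.sizeOf_spec, Expr.fn.sizeOf_spec]; have := List.sizeOf_lt_of_mem e.2; omega)

end Expr

/-- A set of equational axioms between (total data) terms. -/
abbrev Axioms := Set (Expr × Expr)

/-- A data substitution mapping every variable to a partial data term. -/
def TermSub (σ : ℕ → Expr) : Prop := ∀ x, (σ x).IsTerm

/-- `σ` is safe for `t`: variables occurring more than once in `t`
are mapped to total data terms. -/
def SafeSub (σ : ℕ → Expr) (t : Expr) : Prop :=
  ∀ x, 2 ≤ Expr.varCount x t → Expr.IsTotalTerm (σ x)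

/-- Well-formed set of equational axioms: a finite set of equations between
total data terms. -/
def WfAxioms (C : Axioms) : Prop :=
  C.Finite ∧ ∀ p ∈ C, Expr.IsTotalTerm p.1 ∧ Expr.IsTotalTerm p.2

/-- `[C]_⊒` : the instances of the axioms of `C`, read in both directions,
under safe partial data substitutions. -/
def CInstances (C : Axioms) : Set (Expr × Expr) :=
  { q | ∃ p ∈ C, ∃ σ : ℕ → Expr, TermSub σ ∧
      ((SafeSub σ p.1 ∧ q = (p.1.subst σ, p.2.subst σ)) ∨
       (SafeSub σ p.2 ∧ q = (p.2.subst σ, p.1.subst σ))) }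

/-- Every axiom is regular : both sides have the same data variables. -/
def RegularAxioms (C : Axioms) : Prop :=
  ∀ p ∈ C, ∀ x, Expr.Occurs x p.1 ↔ Expr.Occurs x p.2

/-- Every axiom is non-collapsing : neither side is a variable. -/
def NonCollapsing (C : Axioms) : Prop :=
  ∀ p ∈ C, (∀ x, p.1 ≠ Expr.var x) ∧ (∀ x, p.2 ≠ Expr.var x)

/-- Strongly regular set of axioms. -/
def StronglyRegular (C : Axioms) : Prop := RegularAxioms C ∧ NonCollapsing C

/-- The inequational calculus associated to `C`, deriving approximation
inequalities `s ⊒ t` between partial data terms. -/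
inductive Geq (C : Axioms) : Expr → Expr → Prop where
  | bot {t : Expr} : t.IsTerm → Geq C t Expr.bot
  | refl {t : Expr} : t.IsTerm → Geq C t t
  | trans {t t' t'' : Expr} : Geq C t t' → Geq C t' t'' → Geq C t t''
  | mono {c : ℕ} {ts ss : List Expr} : ts.length = ss.length →
      (∀ p ∈ ts.zip ss, Geq C p.1 p.2) → Geq C (Expr.con c ts) (Expr.con c ss)
  | ax {s t : Expr} : (s, t) ∈ CInstances C → Geq C s t

/-- `s ≈_C t` iff `s ⊒_C t` and `t ⊒_C s`. -/
def EqC (C : Axioms) (s t : Expr) : Prop := Geq C s t ∧ Geq C t s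

end ACRWL

namespace ACRWL

/-- A defining rule `f(t₁,…,tₙ) → r ⇐ a₁ == b₁, …, a_m == b_m`. -/
structure Rule : Type where
  fname : ℕ
  lhs : List Expr
  rhs : Expr
  conds : List (Expr × Expr)

/-- Application of a data substitution to a defining rule. -/
def Rule.subst (σ : ℕ → Expr) (ρ : Rule) : Rule :=
  ⟨ρ.fname, ρ.lhs.map (Expr.subst σ), ρ.rhs.subst σ,
    ρ.conds.map fun p => (p.1.subst σ, p.2.subst σ)⟩

/-- A linear tuple of terms: no variable occurs more than once in the tuple. -/
def Linear (ts : List Expr) : Prop := ∀ x : ℕ, (ts.map (Expr.varCount x)).sum ≤ 1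

/-- Well-formed defining rule: linear left-hand side made of total data
terms; total right-hand side and conditions. -/
def WfRule (ρ : Rule) : Prop :=
  Linear ρ.lhs ∧ (∀ t ∈ ρ.lhs, Expr.IsTotalTerm t) ∧ ρ.rhs.NoBot ∧
  ∀ p ∈ ρ.conds, p.1.NoBot ∧ p.2.NoBot

/-- A program: a finite set of equational axioms for constructors together
with a finite set of defining rules for functions. -/
structure Program : Type where
  C : Axioms
  R : Set Rule
  wfC : WfAxioms C
  finR : R.Finite
  wfR : ∀ ρ ∈ R, WfRule ρ

/-- `[R]_→` : all instances of rules of the program under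
partial data substitutions. -/
def RInstances (P : Program) : Set Rule :=
  { ρ' | ∃ ρ ∈ P.R, ∃ σ : ℕ → Expr, TermSub σ ∧ ρ' = ρ.subst σ }

/-- Statements derived by the rewriting calculi: reduction/approximation
statements `e → e'` and joinability statements `e == e'`. -/
inductive Stm : Type where
  | red : Expr → Expr → Stm
  | join : Expr → Expr → Stm

/-- The Basic Rewriting Calculus (BRC) of a program. -/
inductive BRC (P : Program) : Stm → Prop where
  | bot (e : Expr) : BRC P (Stm.red e Expr.bot)
  | refl (e : Expr) : BRC P (Stm.red e e)
  | trans {e e' e'' : Expr} :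
      BRC P (Stm.red e e') → BRC P (Stm.red e' e'') → BRC P (Stm.red e e'')
  | monoCon {c : ℕ} {es es' : List Expr} : es.length = es'.length →
      (∀ p ∈ es.zip es', BRC P (Stm.red p.1 p.2)) →
      BRC P (Stm.red (Expr.con c es) (Expr.con c es'))
  | monoFn {f : ℕ} {es es' : List Expr} : es.length = es'.length →
      (∀ p ∈ es.zip es', BRC P (Stm.red p.1 p.2)) →
      BRC P (Stm.red (Expr.fn f es) (Expr.fn f es'))
  | rule {ρ : Rule} : ρ ∈ RInstances P →
      (∀ p ∈ ρ.conds, BRC P (Stm.join p.1 p.2)) →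
      BRC P (Stm.red (Expr.fn ρ.fname ρ.lhs) ρ.rhs)
  | mut {s t : Expr} : (s, t) ∈ CInstances P.C → BRC P (Stm.red s t)
  | join {e e' t : Expr} : t.IsTotalTerm →
      BRC P (Stm.red e t) → BRC P (Stm.red e' t) → BRC P (Stm.join e e')

/-- The Goal-Oriented Rewriting Calculus (GORC) of a program. -/
inductive GORC (P : Program) : Stm → Prop where
  | bot (e : Expr) : GORC P (Stm.red e Expr.bot)
  | rrefl (x : ℕ) : GORC P (Stm.red (Expr.var x) (Expr.var x))
  | dc {c : ℕ} {es ts : List Expr} : es.length = ts.length →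
      (∀ p ∈ es.zip ts, GORC P (Stm.red p.1 p.2)) →
      GORC P (Stm.red (Expr.con c es) (Expr.con c ts))
  | omut {c : ℕ} {es ts : List Expr} {s t : Expr} : t ≠ Expr.bot →
      (Expr.con c ts, s) ∈ CInstances P.C → es.length = ts.length →
      (∀ p ∈ es.zip ts, GORC P (Stm.red p.1 p.2)) →
      GORC P (Stm.red s t) → GORC P (Stm.red (Expr.con c es) t)
  | orule {es : List Expr} {ρ : Rule} {t : Expr} : t ≠ Expr.bot →
      ρ ∈ RInstances P → es.length = ρ.lhs.length →
      (∀ p ∈ es.zip ρ.lhs, GORC P (Stm.red p.1 p.2)) →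
      (∀ p ∈ ρ.conds, GORC P (Stm.join p.1 p.2)) →
      GORC P (Stm.red ρ.rhs t) → GORC P (Stm.red (Expr.fn ρ.fname es) t)
  | join {e e' t : Expr} : t.IsTotalTerm →
      GORC P (Stm.red e t) → GORC P (Stm.red e' t) → GORC P (Stm.join e e')

end ACRWL

namespace ACRWL

/-- Polymorphic types built from type variables and type constructors. -/
inductive Ty : Type where
  | tvar : ℕ → Ty
  | tcon : ℕ → List Ty → Ty

namespace Ty

/-- Occurrence of a type variable in a type. -/
inductive OccursT (α : ℕ) : Ty → Prop where
  | tvar : OccursT α (tvar α)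
  | tcon {K : ℕ} {τs : List Ty} {τ : Ty} : τ ∈ τs → OccursT α τ → OccursT α (tcon K τs)

/-- Application of a type substitution. -/
def subst (σ : ℕ → Ty) : Ty → Ty
  | tvar α => σ α
  | tcon K τs => tcon K (τs.attach.map fun τ => subst σ τ.1)
termination_by τ => sizeOf τ
decreasing_by
  all_goals (simp only [Ty.tcon.sizeOf_spec]; have := List.sizeOf_lt_of_mem τ.2; omega)

end Ty

/-- A principal type declaration `(τ₁,…,τₙ) → τ`. -/
structure Decl : Type where
  args : List Ty
  res : Ty

/-- Transparency: every type variable of the argument types occurs in the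
result type. -/
def Decl.Transparent (d : Decl) : Prop :=
  ∀ α : ℕ, (∃ τ ∈ d.args, Ty.OccursT α τ) → Ty.OccursT α d.res

/-- Instance of a declaration under a type substitution. -/
def Decl.substT (σt : ℕ → Ty) (d : Decl) : Decl :=
  ⟨d.args.map (Ty.subst σt), d.res.subst σt⟩

/-- A variant of a declaration: a renaming of its type variables. -/
def IsVariant (d d' : Decl) : Prop :=
  ∃ ρ : ℕ → ℕ, Function.Injective ρ ∧ d' = d.substT (fun α => Ty.tvar (ρ α))

/-- A polymorphic signature: (optional) principal type declarations for data
constructors and for defined function symbols, the former transparent. -/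
structure Signature : Type where
  dc : ℕ → Option Decl
  fs : ℕ → Option Decl
  dc_trans : ∀ c d, dc c = some d → Decl.Transparent d

/-- An environment: at most one type annotation per data variable. -/
abbrev Env := ℕ → Option Ty

/-- Instance of an environment under a type substitution. -/
def Env.substT (V : Env) (σt : ℕ → Ty) : Env := fun x => (V x).map (Ty.subst σt)

/-- The type inference system: `HasType Sg V e τ` is the judgement
`V ⊢_{Σ⊥} e : τ`.  The symbol `⊥` has principal type `⊥ : → α`, hence
every type is an admissible instance for it. -/
inductive HasType (Sg : Signature) (V : Env) : Expr → Ty → Prop where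
  | var {x : ℕ} {τ : Ty} : V x = some τ → HasType Sg V (Expr.var x) τ
  | bot (τ : Ty) : HasType Sg V Expr.bot τ
  | con {c : ℕ} {es : List Expr} {d : Decl} {σt : ℕ → Ty} :
      Sg.dc c = some d → es.length = d.args.length →
      (∀ p ∈ es.zip d.args, HasType Sg V p.1 (Ty.subst σt p.2)) →
      HasType Sg V (Expr.con c es) (Ty.subst σt d.res)
  | fn {f : ℕ} {es : List Expr} {d : Decl} {σt : ℕ → Ty} :
      Sg.fs f = some d → es.length = d.args.length →
      (∀ p ∈ es.zip d.args, HasType Sg V p.1 (Ty.subst σt p.2)) →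
      HasType Sg V (Expr.fn f es) (Ty.subst σt d.res)

/-- Occurrence of a function symbol in an expression. -/
inductive FnOccurs (f : ℕ) : Expr → Prop where
  | head {es : List Expr} : FnOccurs f (Expr.fn f es)
  | con {c : ℕ} {es : List Expr} {e : Expr} : e ∈ es → FnOccurs f e → FnOccurs f (Expr.con c es)
  | fn {g : ℕ} {es : List Expr} {e : Expr} : e ∈ es → FnOccurs f e → FnOccurs f (Expr.fn g es)

end ACRWL

namespace ACRWL

/-- A regular defining rule: every variable of the right-hand side occurs in
the left-hand side. -/
def RegularRule (ρ : Rule) : Prop :=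
  ∀ x : ℕ, Expr.Occurs x ρ.rhs → ∃ t ∈ ρ.lhs, Expr.Occurs x t

/-- A well-typed (regular) defining rule for `f : (τ₁,…,τₙ) → τ`: in some
environment the left-hand side arguments have the declared argument types,
the right-hand side has the declared result type, and the two sides of every
condition share a type. -/
def WellTypedRule (Sg : Signature) (ρ : Rule) : Prop :=
  ∃ d : Decl, Sg.fs ρ.fname = some d ∧ ρ.lhs.length = d.args.length ∧
    ∃ V : Env,
      (∀ p ∈ ρ.lhs.zip d.args, HasType Sg V p.1 p.2) ∧
      HasType Sg V ρ.rhs d.res ∧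
      ∀ p ∈ ρ.conds, ∃ τ : Ty, HasType Sg V p.1 τ ∧ HasType Sg V p.2 τ

/-- A well-typed strongly regular equational axiom
`c(t₁,…,tₙ) ≈ d(s₁,…,s_m)`: the principal types of `c` and `d` admit
variants with a common result type `τ` such that both sides have type `τ`
in some environment. -/
def WellTypedAxiom (Sg : Signature) (p : Expr × Expr) : Prop :=
  ∃ (c : ℕ) (ts : List Expr) (d : ℕ) (ss : List Expr)
      (τs τs' : List Ty) (τ : Ty),
    p.1 = Expr.con c ts ∧ p.2 = Expr.con d ss ∧
    (∃ D, Sg.dc c = some D ∧ IsVariant D ⟨τs, τ⟩) ∧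
    (∃ D, Sg.dc d = some D ∧ IsVariant D ⟨τs', τ⟩) ∧
    ∃ V : Env, HasType Sg V p.1 τ ∧ HasType Sg V p.2 τ

/-- A well-typed strongly regular program. -/
def WellTypedProgram (Sg : Signature) (P : Program) : Prop :=
  StronglyRegular P.C ∧
  (∀ p ∈ P.C, WellTypedAxiom Sg p) ∧
  (∀ ρ ∈ P.R, RegularRule ρ ∧ WellTypedRule Sg ρ)

end ACRWL

namespace ACRWL

/-- Expression whose data variables all belong to the environment `V`
(i.e. to the set `X` of variables of `V`). -/
def ExprOver (V : Env) (e : Expr) : Prop := ∀ x, Expr.Occurs x e → (V x).isSome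

/-- Partial data term over the variables of `V`: an element (representative)
of the data universe of the term model `M_P(V)`. -/
def TermOver (V : Env) (t : Expr) : Prop := t.IsTerm ∧ ExprOver V t

/-- `[t]` is a maximal (totally defined) element of the data universe of the
term model. -/
def MaxClass (P : Program) (V : Env) (t : Expr) : Prop :=
  ∀ s, TermOver V s → Geq P.C s t → Geq P.C t s

/-- Denotation in the term model `M_P(V)` under the data valuation
represented by the substitution `σd`:  `MDen P σd e t` means
`[t] ∈ ⟦e⟧^{M_P(V)}[σd]`. -/
inductive MDen (P : Program) (σd : ℕ → Expr) : Expr → Expr → Prop where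
  | bot {t : Expr} : EqC P.C t Expr.bot → MDen P σd Expr.bot t
  | var {x : ℕ} {t : Expr} : Geq P.C (σd x) t → MDen P σd (Expr.var x) t
  | con {c : ℕ} {es ts : List Expr} {t : Expr} : es.length = ts.length →
      (∀ p ∈ es.zip ts, MDen P σd p.1 p.2) →
      Geq P.C (Expr.con c ts) t → MDen P σd (Expr.con c es) t
  | fn {f : ℕ} {es ts : List Expr} {t t' : Expr} : es.length = ts.length →
      (∀ p ∈ es.zip ts, MDen P σd p.1 p.2) →
      GORC P (Stm.red (Expr.fn f ts) t') → EqC P.C t t' →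
      MDen P σd (Expr.fn f es) t

/-- The term model satisfies `a == b` under the valuation `[σd]`. -/
def MJoinSat (P : Program) (V : Env) (σd : ℕ → Expr) (a b : Expr) : Prop :=
  ∃ s, TermOver V s ∧ MaxClass P V s ∧ MDen P σd a s ∧ MDen P σd b s

/-- The term model satisfies `e → e'` under the valuation `[σd]`
(denotation inclusion). -/
def MRedSat (P : Program) (σd : ℕ → Expr) (e e' : Expr) : Prop :=
  ∀ s, MDen P σd e' s → MDen P σd e s

/-- The valuation `[σd]` over the term model is safe for `t`. -/
def MSafeVal (P : Program) (V : Env) (σd : ℕ → Expr) (t : Expr) : Prop :=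
  ∀ x, 2 ≤ Expr.varCount x t → MaxClass P V (σd x)

/-- A substitution representing a data valuation over the term model. -/
def MValuation (V : Env) (σd : ℕ → Expr) : Prop :=
  TermSub σd ∧ ∀ x, TermOver V (σd x)

/-- The term model satisfies a defining rule. -/
def MSatRule (P : Program) (V : Env) (ρ : Rule) : Prop :=
  ∀ σd, MValuation V σd → (∀ p ∈ ρ.conds, MJoinSat P V σd p.1 p.2) →
    MRedSat P σd (Expr.fn ρ.fname ρ.lhs) ρ.rhs

/-- The term model satisfies an equational axiom. -/
def MSatAxiom (P : Program) (V : Env) (p : Expr × Expr) : Prop :=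
  ∀ σd, MValuation V σd →
    (MSafeVal P V σd p.1 → MRedSat P σd p.1 p.2) ∧
    (MSafeVal P V σd p.2 → MRedSat P σd p.2 p.1)

/-- The term model `M_P(V)` is a model of `P`. -/
def MModels (P : Program) (V : Env) : Prop :=
  (∀ ρ ∈ P.R, MSatRule P V ρ) ∧ (∀ p ∈ P.C, MSatAxiom P V p)

end ACRWL

/-!
The term model is built so that `[t] ∈ ⟦e⟧[σd]` says that `eσd →_P t` up to `≈_C`, and (a)
is proved by induction on the denotation in one direction and on the GORC derivation in the
other. Denotations are downward closed for `⊒_C`, so the first direction needs the targets of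
GORC derivations to be downward closed too: a monotonicity step of `⊒_C` is absorbed by the
`DC` rules, and an axiom step, which relates two constructor applications because the axioms
are non-collapsing, by `OMUT`. In the other direction, GORC derivations starting from a data
term are sound for `⊒_C`, which takes care of the variables of `e`.

(b) follows from (a) because `[tσd] ∈ ⟦t⟧` and GORC derivations compose through data terms.
For (c), the maximal classes are exactly the total data terms: by regularity an axiom instance
with a total side is total on the other side, so total terms are maximal, and filling the `⊥`s of
a data term gives a total term above it. The witness of a GORC join may contain variables outside
`V`; instantiating them by a closed total term keeps the derivations and puts the witness in the
data universe of `M_P(V)`.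
-/

namespace List

variable {α β γ δ : Type*}

theorem forall_mem_zip_map {f : α → γ} {g : β → δ} {Q : γ × δ → Prop} {l₁ : List α}
    {l₂ : List β} :
    (∀ p ∈ (l₁.map f).zip (l₂.map g), Q p) ↔
      ∀ p ∈ l₁.zip l₂, Q (f p.1, g p.2) := by
  rw [zip_map, forall_mem_map]; rfl

theorem forall_mem_zip_map_left {f : α → γ} {Q : γ × β → Prop} {l₁ : List α}
    {l₂ : List β} :
    (∀ p ∈ (l₁.map f).zip l₂, Q p) ↔ ∀ p ∈ l₁.zip l₂, Q (f p.1, p.2) := by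
  rw [zip_map_left, forall_mem_map]; rfl

theorem forall_mem_zip_map_self {f : α → β} {Q : α × β → Prop} {l : List α} :
    (∀ p ∈ l.zip (l.map f), Q p) ↔ ∀ a ∈ l, Q (a, f a) := by
  have h := zip_map' (f := id) (g := f) (l := l)
  rw [map_id] at h
  rw [h, forall_mem_map]; rfl

theorem forall_mem_zip_self {Q : α × α → Prop} {l : List α} :
    (∀ p ∈ l.zip l, Q p) ↔ ∀ a ∈ l, Q (a, a) := by
  simpa only [map_id, id] using forall_mem_zip_map_self (f := id) (Q := Q) (l := l)

theorem forall_mem_zip_swap {Q : β × α → Prop} {l₁ : List α} {l₂ : List β} :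
    (∀ p ∈ l₂.zip l₁, Q p) ↔ ∀ p ∈ l₁.zip l₂, Q p.swap := by
  rw [← zip_swap, forall_mem_map]

theorem forall_mem_left_of_forall_mem_zip {Q : α → Prop} {l₁ : List α} {l₂ : List β}
    (hlen : l₁.length = l₂.length) (h : ∀ p ∈ l₁.zip l₂, Q p.1) :
    ∀ a ∈ l₁, Q a := by
  rw [← map_fst_zip hlen.le]
  simpa only [forall_mem_map] using h

theorem forall_mem_right_of_forall_mem_zip {Q : β → Prop} {l₁ : List α} {l₂ : List β}
    (hlen : l₁.length = l₂.length) (h : ∀ p ∈ l₁.zip l₂, Q p.2) :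
    ∀ b ∈ l₂, Q b := by
  rw [← map_snd_zip hlen.ge]
  simpa only [forall_mem_map] using h

theorem forall_mem_zip_trans {R : α × β → Prop} {S : β × γ → Prop}
    {T : α × γ → Prop} :
    ∀ {l₁ : List α} {l₂ : List β} {l₃ : List γ}, l₁.length = l₂.length →
      (∀ p ∈ l₁.zip l₂, R p) → (∀ p ∈ l₂.zip l₃, S p) →
      (∀ a b c, R (a, b) → S (b, c) → T (a, c)) → ∀ p ∈ l₁.zip l₃, T p
  | [], _, _, _, _, _, _ => by simp
  | _ :: _, [], _, hlen, _, _, _ => by simp at hlen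
  | _ :: _, _ :: _, [], _, _, _, _ => by simp
  | _ :: _, _ :: _, _ :: _, hlen, hR, hS, hRS => by
    simp only [zip_cons_cons, forall_mem_cons] at hR hS ⊢
    exact ⟨hRS _ _ _ hR.1 hS.1, forall_mem_zip_trans (by simpa using hlen) hR.2 hS.2 hRS⟩

end List

namespace ACRWL

namespace Expr

@[simp] theorem subst_var (σ : ℕ → Expr) (x : ℕ) : (var x).subst σ = σ x := by
  rw [subst]

@[simp] theorem subst_bot (σ : ℕ → Expr) : bot.subst σ = bot := by
  rw [subst]

@[simp] theorem subst_con (σ : ℕ → Expr) (c : ℕ) (es : List Expr) :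
    (con c es).subst σ = con c (es.map (subst σ)) := by
  rw [subst]; simp

@[simp] theorem subst_fn (σ : ℕ → Expr) (f : ℕ) (es : List Expr) :
    (fn f es).subst σ = fn f (es.map (subst σ)) := by
  rw [subst]; simp

theorem subst_subst (σ θ : ℕ → Expr) :
    ∀ e : Expr, (e.subst σ).subst θ = e.subst fun x => (σ x).subst θ
  | var x => by simp
  | bot => by simp
  | con c es => by
    simp only [subst_con, List.map_map]
    exact congrArg _ (List.map_congr_left fun a ha => subst_subst σ θ a)
  | fn f es => by
    simp only [subst_fn, List.map_map]
    exact congrArg _ (List.map_congr_left fun a ha => subst_subst σ θ a)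
termination_by e => sizeOf e
decreasing_by
  all_goals
    simp only [con.sizeOf_spec, fn.sizeOf_spec]; have := List.sizeOf_lt_of_mem ha; omega

theorem subst_eq_self {σ : ℕ → Expr} :
    ∀ e : Expr, (∀ x, Occurs x e → σ x = var x) → e.subst σ = e
  | var x, h => by simp [h x .var]
  | bot, _ => by simp
  | con c es, h => by
    simp only [subst_con]
    exact congrArg _ ((List.map_congr_left (g := id) fun a ha =>
      subst_eq_self a fun x hx => h x (.con ha hx)).trans (List.map_id es))
  | fn f es, h => by
    simp only [subst_fn]
    exact congrArg _ ((List.map_congr_left (g := id) fun a ha =>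
      subst_eq_self a fun x hx => h x (.fn ha hx)).trans (List.map_id es))
termination_by e => sizeOf e
decreasing_by
  all_goals
    simp only [con.sizeOf_spec, fn.sizeOf_spec]; have := List.sizeOf_lt_of_mem ha; omega

theorem exists_occurs_of_occurs_subst {σ : ℕ → Expr} {y : ℕ} :
    ∀ {e : Expr}, Occurs y (e.subst σ) → ∃ x, Occurs x e ∧ Occurs y (σ x)
  | var x, h => ⟨x, .var, by simpa using h⟩
  | bot, h => by simp at h; cases h
  | con c es, h => by
    simp only [subst_con] at h
    obtain _ | ⟨hmem, hocc⟩ := h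
    obtain ⟨a, ha, rfl⟩ := List.mem_map.1 hmem
    obtain ⟨x, hx, hy⟩ := exists_occurs_of_occurs_subst hocc
    exact ⟨x, .con ha hx, hy⟩
  | fn f es, h => by
    simp only [subst_fn] at h
    obtain _ | _ | ⟨hmem, hocc⟩ := h
    obtain ⟨a, ha, rfl⟩ := List.mem_map.1 hmem
    obtain ⟨x, hx, hy⟩ := exists_occurs_of_occurs_subst hocc
    exact ⟨x, .fn ha hx, hy⟩
termination_by e => sizeOf e
decreasing_by
  all_goals
    simp only [con.sizeOf_spec, fn.sizeOf_spec]; have := List.sizeOf_lt_of_mem ha; omega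

theorem occurs_of_varCount_pos {x : ℕ} : ∀ {e : Expr}, 0 < e.varCount x → Occurs x e
  | var y, h => by
    rw [varCount] at h
    split_ifs at h with hyx
    · exact hyx ▸ .var
    · omega
  | bot, h => by rw [varCount] at h; omega
  | con c es, h => by
    rw [varCount, List.attach_map_val, List.sum_pos_iff_exists_pos_nat] at h
    obtain ⟨n, hn, hpos⟩ := h
    obtain ⟨a, ha, rfl⟩ := List.mem_map.1 hn
    exact .con ha (occurs_of_varCount_pos hpos)
  | fn f es, h => by
    rw [varCount, List.attach_map_val, List.sum_pos_iff_exists_pos_nat] at h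
    obtain ⟨n, hn, hpos⟩ := h
    obtain ⟨a, ha, rfl⟩ := List.mem_map.1 hn
    exact .fn ha (occurs_of_varCount_pos hpos)
termination_by e => sizeOf e
decreasing_by
  all_goals
    simp only [con.sizeOf_spec, fn.sizeOf_spec]; have := List.sizeOf_lt_of_mem ha; omega

theorem IsTerm.subst {σ : ℕ → Expr} (hσ : TermSub σ) {e : Expr} (h : e.IsTerm) :
    (e.subst σ).IsTerm := by
  induction h with
  | var x => simpa using hσ x
  | bot => simpa using IsTerm.bot
  | con _ ih =>
    rw [subst_con]
    exact .con fun _ hu => by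
      obtain ⟨a, ha, rfl⟩ := List.mem_map.1 hu
      exact ih a ha

theorem NoBot.subst {σ : ℕ → Expr} {e : Expr} (h : e.NoBot)
    (hσ : ∀ x, Occurs x e → (σ x).NoBot) : (e.subst σ).NoBot := by
  induction h with
  | var x => simpa using hσ x .var
  | con _ ih =>
    rw [subst_con]
    exact .con fun _ hu => by
      obtain ⟨a, ha, rfl⟩ := List.mem_map.1 hu
      exact ih a ha fun x hx => hσ x (.con ha hx)
  | fn _ ih =>
    rw [subst_fn]
    exact .fn fun _ hu => by
      obtain ⟨a, ha, rfl⟩ := List.mem_map.1 hu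
      exact ih a ha fun x hx => hσ x (.fn ha hx)

theorem NoBot.of_subst {σ : ℕ → Expr} {x : ℕ} {e : Expr} (hx : Occurs x e)
    (h : (e.subst σ).NoBot) : (σ x).NoBot := by
  induction hx with
  | var => simpa using h
  | con hmem _ ih =>
    rw [subst_con] at h
    cases h with
    | con h => exact ih (h _ (List.mem_map_of_mem hmem))
  | fn hmem _ ih =>
    rw [subst_fn] at h
    cases h with
    | fn h => exact ih (h _ (List.mem_map_of_mem hmem))

theorem IsTotalTerm.subst {σ : ℕ → Expr} (hσ : ∀ x, (σ x).IsTotalTerm) {e : Expr}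
    (h : e.IsTotalTerm) : (e.subst σ).IsTotalTerm :=
  ⟨h.1.subst fun x => (hσ x).1, h.2.subst fun x _ => (hσ x).2⟩

theorem IsTotalTerm.exists_eq_con {e : Expr} (h : e.IsTotalTerm) (hv : ∀ x, e ≠ var x) :
    ∃ c ts, e = con c ts := by
  cases e with
  | var x => exact absurd rfl (hv x)
  | bot => cases h.2
  | con c ts => exact ⟨c, ts, rfl⟩
  | fn f es => cases h.1

theorem subst_ne_bot {σ : ℕ → Expr} (hσ : ∀ x, (σ x).NoBot) {e : Expr} (he : e ≠ bot) :
    e.subst σ ≠ bot := by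
  cases e with
  | var x =>
    rw [subst_var]
    intro h
    have := hσ x
    rw [h] at this
    cases this
  | bot => exact absurd rfl he
  | con c es => simp
  | fn f es => simp

end Expr

theorem safeSub_of_noBot_subst {σ : ℕ → Expr} {t : Expr} (hσ : TermSub σ)
    (ht : (t.subst σ).NoBot) : SafeSub σ t :=
  fun _ hx => ⟨hσ _, ht.of_subst (Expr.occurs_of_varCount_pos (by omega))⟩

section Approximation

variable {C : Axioms} {s t : Expr}

theorem CInstances.isTerm (hwf : WfAxioms C) (h : (s, t) ∈ CInstances C) :
    s.IsTerm ∧ t.IsTerm := by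
  obtain ⟨p, hp, σ, hσ, ⟨-, hst⟩ | ⟨-, hst⟩⟩ := h <;> cases hst
  · exact ⟨(hwf.2 p hp).1.1.subst hσ, (hwf.2 p hp).2.1.subst hσ⟩
  · exact ⟨(hwf.2 p hp).2.1.subst hσ, (hwf.2 p hp).1.1.subst hσ⟩

theorem CInstances.exists_eq_con (hwf : WfAxioms C) (hnc : NonCollapsing C)
    (h : (s, t) ∈ CInstances C) : (∃ c ss, s = .con c ss) ∧ ∃ d ts, t = .con d ts := by
  have hcon : ∀ p ∈ C, ∀ σ : ℕ → Expr,
      (∃ c ss, p.1.subst σ = .con c ss) ∧ ∃ d ts, p.2.subst σ = .con d ts := by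
    intro p hp σ
    obtain ⟨c, ss, h₁⟩ := (hwf.2 p hp).1.exists_eq_con (hnc p hp).1
    obtain ⟨d, ts, h₂⟩ := (hwf.2 p hp).2.exists_eq_con (hnc p hp).2
    simp [h₁, h₂]
  obtain ⟨p, hp, σ, -, ⟨-, hst⟩ | ⟨-, hst⟩⟩ := h <;> cases hst
  · exact hcon p hp σ
  · exact (hcon p hp σ).symm

theorem CInstances.noBot_of_noBot (hwf : WfAxioms C) (hreg : RegularAxioms C)
    (h : (s, t) ∈ CInstances C) (ht : t.NoBot) : s.NoBot := by
  obtain ⟨p, hp, σ, -, ⟨-, hst⟩ | ⟨-, hst⟩⟩ := h <;> cases hst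
  · exact (hwf.2 p hp).1.2.subst fun x hx => ht.of_subst ((hreg p hp x).1 hx)
  · exact (hwf.2 p hp).2.2.subst fun x hx => ht.of_subst ((hreg p hp x).2 hx)

theorem CInstances.symm (h : (s, t) ∈ CInstances C) (ht : t.NoBot) : (t, s) ∈ CInstances C := by
  obtain ⟨p, hp, σ, hσ, ⟨-, hst⟩ | ⟨-, hst⟩⟩ := h <;> cases hst
  · exact ⟨p, hp, σ, hσ, .inr ⟨safeSub_of_noBot_subst hσ ht, rfl⟩⟩
  · exact ⟨p, hp, σ, hσ, .inl ⟨safeSub_of_noBot_subst hσ ht, rfl⟩⟩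

theorem CInstances.subst {θ : ℕ → Expr} (hθ : ∀ x, (θ x).IsTotalTerm)
    (h : (s, t) ∈ CInstances C) : (s.subst θ, t.subst θ) ∈ CInstances C := by
  obtain ⟨p, hp, σ, hσ, ⟨hsafe, hst⟩ | ⟨hsafe, hst⟩⟩ := h <;> cases hst <;>
    refine ⟨p, hp, fun x => (σ x).subst θ, fun x => (hσ x).subst fun y => (hθ y).1, ?_⟩
  · exact .inl ⟨fun x hx => (hsafe x hx).subst hθ, by simp only [Expr.subst_subst]⟩
  · exact .inr ⟨fun x hx => (hsafe x hx).subst hθ, by simp only [Expr.subst_subst]⟩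

theorem Geq.isTerm (hwf : WfAxioms C) (h : Geq C s t) : s.IsTerm ∧ t.IsTerm := by
  induction h with
  | bot h => exact ⟨h, .bot⟩
  | refl h => exact ⟨h, h⟩
  | trans _ _ ih₁ ih₂ => exact ⟨ih₁.1, ih₂.2⟩
  | mono hlen _ ih =>
    exact ⟨.con (List.forall_mem_left_of_forall_mem_zip hlen fun p hp => (ih p hp).1),
      .con (List.forall_mem_right_of_forall_mem_zip hlen fun p hp => (ih p hp).2)⟩
  | ax h => exact CInstances.isTerm hwf h

theorem Geq.eq_bot (hwf : WfAxioms C) (hnc : NonCollapsing C) (h : Geq C s t)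
    (hs : s = .bot) : t = .bot := by
  induction h with
  | bot _ => rfl
  | refl _ => exact hs
  | trans _ _ ih₁ ih₂ => exact ih₂ (ih₁ hs)
  | mono _ _ _ => cases hs
  | ax h =>
    obtain ⟨⟨c, ss, rfl⟩, -⟩ := CInstances.exists_eq_con hwf hnc h
    cases hs

theorem Geq.noBot_of_noBot (hwf : WfAxioms C) (hreg : RegularAxioms C) (h : Geq C s t)
    (ht : t.NoBot) : s.NoBot := by
  induction h with
  | bot _ => cases ht
  | refl _ => exact ht
  | trans _ _ ih₁ ih₂ => exact ih₁ (ih₂ ht)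
  | mono hlen _ ih =>
    obtain _ | ⟨ht⟩ := ht
    exact .con (List.forall_mem_left_of_forall_mem_zip hlen fun p hp =>
      ih p hp (ht _ (List.of_mem_zip hp).2))
  | ax h => exact CInstances.noBot_of_noBot hwf hreg h ht

theorem Geq.symm_of_noBot (hwf : WfAxioms C) (hreg : RegularAxioms C) (h : Geq C s t)
    (ht : t.NoBot) : Geq C t s := by
  induction h with
  | bot _ => cases ht
  | refl h => exact .refl h
  | trans _ h₂ ih₁ ih₂ => exact (ih₂ ht).trans (ih₁ (h₂.noBot_of_noBot hwf hreg ht))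
  | mono hlen _ ih =>
    obtain _ | ⟨ht⟩ := ht
    exact .mono hlen.symm (List.forall_mem_zip_swap.2
      fun p hp => ih p hp (ht _ (List.of_mem_zip hp).2))
  | ax h => exact .ax (CInstances.symm h ht)

end Approximation

theorem Rule.subst_subst (σ θ : ℕ → Expr) (ρ : Rule) :
    (ρ.subst σ).subst θ = ρ.subst fun x => (σ x).subst θ := by
  simp [Rule.subst, Expr.subst_subst, Function.comp_def]

theorem RInstances.subst {P : Program} {θ : ℕ → Expr} (hθ : ∀ x, (θ x).IsTotalTerm)
    {ρ : Rule} (h : ρ ∈ RInstances P) : ρ.subst θ ∈ RInstances P := by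
  obtain ⟨ρ₀, hρ₀, σ, hσ, rfl⟩ := h
  exact ⟨ρ₀, hρ₀, _, fun x => (hσ x).subst fun y => (hθ y).1,
    Rule.subst_subst σ θ ρ₀⟩

theorem RInstances.isTerm_lhs {P : Program} {ρ : Rule} (h : ρ ∈ RInstances P) :
    ∀ t ∈ ρ.lhs, t.IsTerm := by
  obtain ⟨ρ₀, hρ₀, σ, hσ, rfl⟩ := h
  simp only [Rule.subst, List.forall_mem_map]
  exact fun t ht => ((P.wfR ρ₀ hρ₀).2.1 t ht).1.subst hσ

def Stm.subst (θ : ℕ → Expr) : Stm → Stm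
  | .red e t => .red (e.subst θ) (t.subst θ)
  | .join a b => .join (a.subst θ) (b.subst θ)

namespace GORC

variable {P : Program}

@[elab_as_elim]
theorem red_induction {motive : Expr → Expr → Prop}
    (bot : ∀ e, motive e .bot)
    (rrefl : ∀ x, motive (.var x) (.var x))
    (dc : ∀ {c es ts}, es.length = ts.length → (∀ p ∈ es.zip ts, GORC P (.red p.1 p.2)) →
      (∀ p ∈ es.zip ts, motive p.1 p.2) → motive (.con c es) (.con c ts))
    (omut : ∀ {c es ts s t}, t ≠ .bot → (Expr.con c ts, s) ∈ CInstances P.C →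
      es.length = ts.length → (∀ p ∈ es.zip ts, GORC P (.red p.1 p.2)) →
      GORC P (.red s t) → (∀ p ∈ es.zip ts, motive p.1 p.2) → motive s t →
      motive (.con c es) t)
    (orule : ∀ {es ρ t}, t ≠ .bot → ρ ∈ RInstances P → es.length = ρ.lhs.length →
      (∀ p ∈ es.zip ρ.lhs, GORC P (.red p.1 p.2)) →
      (∀ p ∈ ρ.conds, GORC P (.join p.1 p.2)) → GORC P (.red ρ.rhs t) →
      (∀ p ∈ es.zip ρ.lhs, motive p.1 p.2) → motive ρ.rhs t → motive (.fn ρ.fname es) t)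
    {e t : Expr} (h : GORC P (.red e t)) : motive e t := by
  suffices ∀ st, GORC P st → ∀ e t, st = .red e t → motive e t from this _ h e t rfl
  intro st h
  induction h with
  | bot e => rintro _ _ ⟨⟩; exact bot e
  | rrefl x => rintro _ _ ⟨⟩; exact rrefl x
  | dc hlen hargs ih => rintro _ _ ⟨⟩; exact dc hlen hargs fun p hp => ih p hp _ _ rfl
  | omut hne hins hlen hargs hst ih ihst =>
    rintro _ _ ⟨⟩
    exact omut hne hins hlen hargs hst (fun p hp => ih p hp _ _ rfl) (ihst _ _ rfl)
  | orule hne hρ hlen hargs hconds hrhs ih _ ihrhs =>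
    rintro _ _ ⟨⟩
    exact orule hne hρ hlen hargs hconds hrhs (fun p hp => ih p hp _ _ rfl) (ihrhs _ _ rfl)
  | join => rintro _ _ ⟨⟩

theorem isTerm_target {e t : Expr} (h : GORC P (.red e t)) : t.IsTerm :=
  red_induction (fun _ => .bot) (fun x => .var x)
    (fun hlen _ ih => .con (List.forall_mem_right_of_forall_mem_zip hlen ih))
    (fun _ _ _ _ _ _ ih => ih) (fun _ _ _ _ _ _ _ ih => ih) h

theorem red_self {t : Expr} (h : t.IsTerm) : GORC P (.red t t) := by
  induction h with
  | var x => exact .rrefl x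
  | bot => exact .bot _
  | con _ ih => exact .dc rfl (List.forall_mem_zip_self.2 ih)

theorem red_con_of_forall {e : Expr} {c : ℕ} {ts ss : List Expr}
    (h : GORC P (.red e (.con c ts))) (hlen : ts.length = ss.length)
    (hts : ∀ p ∈ ts.zip ss, ∀ e', GORC P (.red e' p.1) → GORC P (.red e' p.2)) :
    GORC P (.red e (.con c ss)) := by
  refine red_induction (motive := fun e u => ∀ {c ts ss}, u = .con c ts →
      ts.length = ss.length →
      (∀ p ∈ ts.zip ss, ∀ e', GORC P (.red e' p.1) → GORC P (.red e' p.2)) →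
      GORC P (.red e (.con c ss)))
    (fun _ _ _ _ h => by cases h) (fun _ _ _ _ h => by cases h) ?dc ?omut ?orule h rfl hlen hts
  case dc =>
    rintro c es ts₀ hlen₀ hargs - _ _ ss ⟨⟩ hlen hts
    exact .dc (hlen₀.trans hlen)
      (List.forall_mem_zip_trans hlen₀ hargs hts fun _ _ _ hab hbc => hbc _ hab)
  case omut =>
    rintro c es ts₀ s t - hins hlen₀ hargs - - ihst _ _ ss rfl hlen hts
    exact .omut (by simp) hins hlen₀ hargs (ihst rfl hlen hts)
  case orule =>
    rintro es ρ t - hρ hlen₀ hargs hconds - - ihrhs _ _ ss rfl hlen hts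
    exact .orule (by simp) hρ hlen₀ hargs hconds (ihrhs rfl hlen hts)

theorem red_of_cInstances (hwf : WfAxioms P.C) (hnc : NonCollapsing P.C) {e s t : Expr}
    (h : GORC P (.red e s)) (hst : (s, t) ∈ CInstances P.C) : GORC P (.red e t) := by
  have hcon : ∀ {u}, (u, t) ∈ CInstances P.C → ∃ c ss, u = .con c ss :=
    fun h => (CInstances.exists_eq_con hwf hnc h).1
  have hne : t ≠ .bot := by
    obtain ⟨-, d, ts, rfl⟩ := CInstances.exists_eq_con hwf hnc hst
    simp
  refine red_induction (motive := fun e s => (s, t) ∈ CInstances P.C → GORC P (.red e t))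
    ?bot ?rrefl ?dc ?omut ?orule h hst
  case bot => intro _ h; obtain ⟨_, _, h⟩ := hcon h; cases h
  case rrefl => intro _ h; obtain ⟨_, _, h⟩ := hcon h; cases h
  case dc =>
    exact fun hlen hargs _ hins =>
      .omut hne hins hlen hargs (red_self (CInstances.isTerm hwf hins).2)
  case omut => exact fun _ hins hlen hargs _ _ ihst hst => .omut hne hins hlen hargs (ihst hst)
  case orule =>
    exact fun _ hρ hlen hargs hconds _ _ ihrhs hst =>
      .orule hne hρ hlen hargs hconds (ihrhs hst)

theorem red_of_geq (hwf : WfAxioms P.C) (hnc : NonCollapsing P.C) {s t : Expr}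
    (hst : Geq P.C s t) {e : Expr} (h : GORC P (.red e s)) : GORC P (.red e t) := by
  induction hst generalizing e with
  | bot _ => exact .bot e
  | refl _ => exact h
  | trans _ _ ih₁ ih₂ => exact ih₂ (ih₁ h)
  | mono hlen _ ih => exact red_con_of_forall h hlen fun p hp _ => ih p hp
  | ax hst => exact red_of_cInstances hwf hnc h hst

theorem geq_of_red (hwf : WfAxioms P.C) {s t : Expr} (h : GORC P (.red s t)) (hs : s.IsTerm) :
    Geq P.C s t := by
  have hmono : ∀ {c es ts}, es.length = ts.length →
      (∀ p ∈ es.zip ts, p.1.IsTerm → Geq P.C p.1 p.2) →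
      (Expr.con c es).IsTerm → Geq P.C (.con c es) (.con c ts) := by
    rintro c es ts hlen ih (_ | _ | ⟨hes⟩)
    exact .mono hlen fun p hp => ih p hp (hes _ (List.of_mem_zip hp).1)
  refine red_induction (motive := fun s t => s.IsTerm → Geq P.C s t) (fun _ hs => .bot hs)
    (fun _ hs => .refl hs) (fun hlen _ ih => hmono hlen ih) ?omut
    (fun _ _ _ _ _ _ _ _ h => by cases h) h hs
  case omut =>
    intro c es ts s t _ hins hlen _ _ ih ihst hs
    exact ((hmono hlen ih hs).trans (.ax hins)).trans (ihst (CInstances.isTerm hwf hins).2)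

theorem red_trans (hwf : WfAxioms P.C) (hnc : NonCollapsing P.C) {e t u : Expr} (ht : t.IsTerm)
    (h₁ : GORC P (.red e t)) (h₂ : GORC P (.red t u)) : GORC P (.red e u) :=
  red_of_geq hwf hnc (geq_of_red hwf h₂ ht) h₁

theorem red_fn_of_args (hwf : WfAxioms P.C) (hnc : NonCollapsing P.C) {f : ℕ}
    {es ts : List Expr} {t : Expr} (h : GORC P (.red (.fn f ts) t))
    (hlen : es.length = ts.length) (hargs : ∀ p ∈ es.zip ts, GORC P (.red p.1 p.2))
    (hts : ∀ u ∈ ts, u.IsTerm) : GORC P (.red (.fn f es) t) := by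
  cases h with
  | bot => exact .bot _
  | orule hne hρ hlen' hargs' hconds hrhs =>
    refine .orule hne hρ (hlen.trans hlen') ?_ hconds hrhs
    exact List.forall_mem_zip_trans (R := fun p => GORC P (.red p.1 p.2) ∧ p.2.IsTerm) hlen
      (fun p hp => ⟨hargs p hp, hts _ (List.of_mem_zip hp).2⟩) hargs'
      fun _ _ _ hab hbc => red_trans hwf hnc hab.2 hab.1 hbc

theorem subst {θ : ℕ → Expr} (hθ : ∀ x, (θ x).IsTotalTerm) {st : Stm} (h : GORC P st) :
    GORC P (st.subst θ) := by
  have hne : ∀ {t : Expr}, t ≠ .bot → t.subst θ ≠ .bot :=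
    Expr.subst_ne_bot fun x => (hθ x).2
  induction h with
  | bot e =>
    simp only [Stm.subst, Expr.subst_bot]
    exact .bot _
  | rrefl x => simpa [Stm.subst] using red_self (hθ x).1
  | dc hlen _ ih =>
    simp only [Stm.subst, Expr.subst_con]
    exact .dc (by simp [hlen]) (List.forall_mem_zip_map.2 ih)
  | omut htne hins hlen _ _ ih ihst =>
    have hins' := CInstances.subst hθ hins
    rw [Expr.subst_con] at hins'
    simp only [Stm.subst, Expr.subst_con]
    exact .omut (hne htne) hins' (by simp [hlen]) (List.forall_mem_zip_map.2 ih) ihst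
  | @orule es ρ t htne hρ hlen _ _ _ ih ihconds ihrhs =>
    simp only [Stm.subst, Expr.subst_fn]
    exact .orule (ρ := ρ.subst θ) (hne htne) (RInstances.subst hθ hρ)
      (by simp [Rule.subst, hlen]) (List.forall_mem_zip_map.2 ih)
      (List.forall_mem_map.2 ihconds) ihrhs
  | join htot _ _ ih₁ ih₂ => exact .join (htot.subst hθ) ih₁ ih₂

end GORC

section TermModel

variable {P : Program} {V : Env} {σd : ℕ → Expr}

theorem ExprOver.subst {θ : ℕ → Expr} (hθ : ∀ x, ExprOver V (θ x)) (e : Expr) :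
    ExprOver V (e.subst θ) := fun _ hy =>
  let ⟨x, _, hx⟩ := Expr.exists_occurs_of_occurs_subst hy
  hθ x _ hx

theorem MDen.isTerm (hwf : WfAxioms P.C) {e t : Expr} (h : MDen P σd e t) : t.IsTerm := by
  cases h with
  | bot h => exact (h.1.isTerm hwf).1
  | var h => exact (h.isTerm hwf).2
  | con _ _ h => exact (h.isTerm hwf).2
  | fn _ _ _ h => exact (h.1.isTerm hwf).1

theorem MDen.bot_right (hσ : TermSub σd) : ∀ e, MDen P σd e .bot
  | .var x => .var (.bot (hσ x))
  | .bot => .bot ⟨.refl .bot, .refl .bot⟩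
  | .con c es => .con (ts := es.map fun _ => .bot) (by simp)
      (List.forall_mem_zip_map_self.2 fun a ha => MDen.bot_right hσ a)
      (.bot (.con (by simp [Expr.IsTerm.bot])))
  | .fn f es => .fn (ts := es.map fun _ => .bot) (by simp)
      (List.forall_mem_zip_map_self.2 fun a ha => MDen.bot_right hσ a) (.bot _)
      ⟨.refl .bot, .refl .bot⟩
termination_by e => sizeOf e
decreasing_by
  all_goals
    simp only [Expr.con.sizeOf_spec, Expr.fn.sizeOf_spec]
    have := List.sizeOf_lt_of_mem ha
    omega

theorem MDen.self_subst (hσ : TermSub σd) {t : Expr} (ht : t.IsTerm) :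
    MDen P σd t (t.subst σd) := by
  induction ht with
  | var x => simpa using MDen.var (.refl (hσ x))
  | bot => simpa using MDen.bot ⟨.refl .bot, .refl .bot⟩
  | @con c es hes ih =>
    have hterm := (Expr.IsTerm.con (c := c) hes).subst hσ
    rw [Expr.subst_con] at hterm ⊢
    exact .con (by simp) (List.forall_mem_zip_map_self.2 ih) (.refl hterm)

theorem MDen.red (hnc : NonCollapsing P.C) (hσ : TermSub σd) {e t : Expr}
    (h : MDen P σd e t) : GORC P (.red (e.subst σd) t) := by
  have hwf := P.wfC
  induction h with
  | bot h =>
    obtain rfl := h.2.eq_bot hwf hnc rfl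
    exact .bot _
  | var h =>
    rw [Expr.subst_var]
    exact GORC.red_of_geq hwf hnc h (GORC.red_self (hσ _))
  | con hlen _ hg ih =>
    rw [Expr.subst_con]
    exact GORC.red_of_geq hwf hnc hg (.dc (by simp [hlen]) (List.forall_mem_zip_map_left.2 ih))
  | fn hlen hargs hred heq ih =>
    rw [Expr.subst_fn]
    have hts := List.forall_mem_right_of_forall_mem_zip hlen fun p hp => (hargs p hp).isTerm hwf
    exact GORC.red_of_geq hwf hnc heq.2 (GORC.red_fn_of_args hwf hnc hred (by simp [hlen])
      (List.forall_mem_zip_map_left.2 ih) hts)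

theorem MDen.of_red (hσ : TermSub σd) {e t : Expr} (h : GORC P (.red (e.subst σd) t)) :
    MDen P σd e t := by
  have hwf := P.wfC
  have hvar : ∀ {y t}, GORC P (.red (σd y) t) → MDen P σd (.var y) t :=
    fun h => .var (GORC.geq_of_red hwf h (hσ _))
  refine GORC.red_induction (motive := fun u t => ∀ e, u = e.subst σd → MDen P σd e t)
    ?bot ?rrefl ?dc ?omut ?orule h e rfl
  case bot => exact fun _ e _ => MDen.bot_right hσ e
  case rrefl =>
    rintro x (y | _ | _ | _) h <;> simp at h
    exact hvar (h ▸ .rrefl x)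
  case dc =>
    rintro c es₀ ts hlen hargs ih (y | _ | ⟨c', es⟩ | _) h <;> simp at h
    · exact hvar (h ▸ .dc hlen hargs)
    · obtain ⟨rfl, rfl⟩ := h
      exact .con (by simpa using hlen) (fun p hp => List.forall_mem_zip_map_left.1 ih p hp p.1 rfl)
        (.refl (GORC.dc hlen hargs).isTerm_target)
  case omut =>
    rintro c es₀ ts s t hne hins hlen hargs hst ih - (y | _ | ⟨c', es⟩ | _) h <;> simp at h
    · exact hvar (h ▸ .omut hne hins hlen hargs hst)
    · obtain ⟨rfl, rfl⟩ := h
      exact .con (by simpa using hlen) (fun p hp => List.forall_mem_zip_map_left.1 ih p hp p.1 rfl)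
        ((Geq.ax hins).trans (GORC.geq_of_red hwf hst (CInstances.isTerm hwf hins).2))
  case orule =>
    rintro es₀ ρ t hne hρ hlen hargs hconds hrhs ih - (y | _ | _ | ⟨f, es⟩) h <;> simp at h
    · have := hσ y
      rw [← h] at this
      cases this
    · obtain ⟨rfl, rfl⟩ := h
      have ht := hrhs.isTerm_target
      exact .fn (by simpa using hlen) (fun p hp => List.forall_mem_zip_map_left.1 ih p hp p.1 rfl)
        (.orule hne hρ rfl (List.forall_mem_zip_self.2 fun a ha =>
          GORC.red_self (RInstances.isTerm_lhs hρ a ha)) hconds hrhs) ⟨.refl ht, .refl ht⟩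

end TermModel

namespace Expr

def fillBot : Expr → Expr
  | var x => var x
  | bot => con 0 []
  | con c es => con c (es.attach.map fun e => fillBot e.1)
  | fn f es => fn f es
termination_by e => sizeOf e
decreasing_by
  simp only [con.sizeOf_spec]; have := List.sizeOf_lt_of_mem e.2; omega

@[simp] theorem fillBot_var (x : ℕ) : (var x).fillBot = var x := by rw [fillBot]

@[simp] theorem fillBot_bot : bot.fillBot = con 0 [] := by rw [fillBot]

@[simp] theorem fillBot_con (c : ℕ) (es : List Expr) :
    (con c es).fillBot = con c (es.map fillBot) := by
  rw [fillBot]; simp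

theorem IsTerm.isTotalTerm_fillBot {e : Expr} (h : e.IsTerm) : e.fillBot.IsTotalTerm := by
  induction h with
  | var x => simpa using ⟨IsTerm.var x, NoBot.var x⟩
  | bot => simpa using ⟨IsTerm.con (c := 0) (by simp), NoBot.con (c := 0) (by simp)⟩
  | con _ ih =>
    rw [fillBot_con]
    exact ⟨.con (by simpa using fun a ha => (ih a ha).1),
      .con (by simpa using fun a ha => (ih a ha).2)⟩

theorem IsTerm.occurs_of_occurs_fillBot {e : Expr} (h : e.IsTerm) {x : ℕ}
    (hx : Occurs x e.fillBot) : Occurs x e := by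
  induction h with
  | var y => simpa using hx
  | bot =>
    rw [fillBot_bot] at hx
    obtain _ | ⟨hmem, -⟩ := hx
    cases hmem
  | con _ ih =>
    rw [fillBot_con] at hx
    obtain _ | ⟨hmem, hocc⟩ := hx
    obtain ⟨a, ha, rfl⟩ := List.mem_map.1 hmem
    exact .con ha (ih a ha hocc)

theorem IsTerm.geq_fillBot {C : Axioms} {e : Expr} (h : e.IsTerm) : Geq C e.fillBot e := by
  induction h with
  | var x => simpa using Geq.refl (.var x)
  | bot => simpa using Geq.bot (.con (c := 0) (by simp))
  | con _ ih =>
    rw [fillBot_con]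
    exact .mono (by simp) (List.forall_mem_zip_map_left.2 (List.forall_mem_zip_self.2 ih))

end Expr

section Maximality

variable {P : Program} {V : Env} {s : Expr}

theorem MaxClass.isTotalTerm (hreg : RegularAxioms P.C) (hs : TermOver V s)
    (hmax : MaxClass P V s) : s.IsTotalTerm := by
  have hfill : TermOver V s.fillBot :=
    ⟨hs.1.isTotalTerm_fillBot.1, fun x hx => hs.2 x (hs.1.occurs_of_occurs_fillBot hx)⟩
  exact ⟨hs.1,
    (hmax _ hfill hs.1.geq_fillBot).noBot_of_noBot P.wfC hreg hs.1.isTotalTerm_fillBot.2⟩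

theorem maxClass_of_noBot (hreg : RegularAxioms P.C) (hs : s.NoBot) : MaxClass P V s :=
  fun _ _ h => h.symm_of_noBot P.wfC hreg hs

end Maximality

theorem GORC.exists_total_of_join {P : Program} {V : Env} {a b : Expr} (ha : ExprOver V a)
    (hb : ExprOver V b) (h : GORC P (.join a b)) :
    ∃ s, s.IsTotalTerm ∧ ExprOver V s ∧ GORC P (.red a s) ∧ GORC P (.red b s) := by
  obtain _ | _ | _ | _ | _ | @⟨_, _, u, hu, hau, hbu⟩ := h
  let θ : ℕ → Expr := fun x => if (V x).isSome then .var x else .con 0 []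
  have hθ : ∀ x, (θ x).IsTotalTerm ∧ ExprOver V (θ x) := by
    intro x
    by_cases hx : (V x).isSome
    · simp only [θ, if_pos hx]
      exact ⟨⟨.var x, .var x⟩, fun y hy => by cases hy; exact hx⟩
    · simp only [θ, if_neg hx]
      refine ⟨⟨.con (by simp), .con (by simp)⟩, fun y hy => ?_⟩
      obtain _ | ⟨hmem, -⟩ := hy
      cases hmem
  have hfix : ∀ {w}, ExprOver V w → w.subst θ = w := fun hw =>
    Expr.subst_eq_self _ fun x hx => if_pos (hw x hx)
  refine ⟨u.subst θ, hu.subst fun x => (hθ x).1, ExprOver.subst (fun x => (hθ x).2) u,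
    ?_, ?_⟩
  · simpa [Stm.subst, hfix ha] using hau.subst fun x => (hθ x).1
  · simpa [Stm.subst, hfix hb] using hbu.subst fun x => (hθ x).1

section Characterization

variable {P : Program} {V : Env} {σd : ℕ → Expr}

theorem mDen_iff_red (hnc : NonCollapsing P.C) (hσ : TermSub σd) {e t : Expr} :
    MDen P σd e t ↔ GORC P (.red (e.subst σd) t) :=
  ⟨MDen.red hnc hσ, MDen.of_red hσ⟩

theorem mRedSat_iff_red (hnc : NonCollapsing P.C) (hσ : TermSub σd) {e t : Expr}
    (ht : t.IsTerm) : MRedSat P σd e t ↔ GORC P (.red (e.subst σd) (t.subst σd)) := by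
  refine ⟨fun h => (mDen_iff_red hnc hσ).1 (h _ (MDen.self_subst hσ ht)), fun h s hs => ?_⟩
  exact (mDen_iff_red hnc hσ).2
    (GORC.red_trans P.wfC hnc (ht.subst hσ) h ((mDen_iff_red hnc hσ).1 hs))

theorem mJoinSat_iff_join (hsr : StronglyRegular P.C) (hσ : MValuation V σd) {a b : Expr} :
    MJoinSat P V σd a b ↔ GORC P (.join (a.subst σd) (b.subst σd)) := by
  constructor
  · rintro ⟨s, hs, hmax, has, hbs⟩
    exact .join (hmax.isTotalTerm hsr.1 hs) ((mDen_iff_red hsr.2 hσ.1).1 has)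
      ((mDen_iff_red hsr.2 hσ.1).1 hbs)
  · intro h
    have hover := ExprOver.subst fun x => (hσ.2 x).2
    obtain ⟨s, hs, hsV, has, hbs⟩ := GORC.exists_total_of_join (hover a) (hover b) h
    exact ⟨s, ⟨hs.1, hsV⟩, maxClass_of_noBot hsr.1 hs.2, (mDen_iff_red hsr.2 hσ.1).2 has,
      (mDen_iff_red hsr.2 hσ.1).2 hbs⟩

end Characterization

theorem characterization_lemma_general (P : Program) (V : Env)
    (hsr : StronglyRegular P.C)
    (σd : ℕ → Expr) (hσd : MValuation V σd)
    (e a b t : Expr)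
    (ht : TermOver V t) :
    (MDen P σd e t ↔ GORC P (Stm.red (Expr.subst σd e) t)) ∧
    ((∀ s, MDen P σd t s → MDen P σd e s) ↔
        GORC P (Stm.red (Expr.subst σd e) (Expr.subst σd t))) ∧
    ((∃ s, TermOver V s ∧ MaxClass P V s ∧ MDen P σd a s ∧ MDen P σd b s) ↔
        GORC P (Stm.join (Expr.subst σd a) (Expr.subst σd b))) :=
  ⟨mDen_iff_red hsr.2 hσd.1, mRedSat_iff_red hsr.2 hσd.1 ht.1, mJoinSat_iff_join hsr hσd⟩

/-- Lemma 5.6 (characterization lemma): let `P` be a program whose set of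
equational axioms is strongly regular and well-typed, and let
`[σ] = (σt, [σd])` be a valuation over the term model `M_P(V)` represented
by a substitution.  Then for all `e, a, b ∈ Expr_{Σ⊥}(X)` and all
`t ∈ Term_{Σ⊥}(X)`:
(a) `[t] ∈ ⟦e⟧^{M_P(V)}[σd]` iff `eσd →_P t`;
(b) `(M_P(V), [σd]) ⊨ e → t` iff `eσd →_P tσd`;
(c) `(M_P(V), [σd]) ⊨ a == b` iff `aσd ==_P bσd`. -/
theorem characterization_lemma (Sg : Signature) (P : Program) (V : Env)
    (hsr : StronglyRegular P.C) (hwt : ∀ p ∈ P.C, WellTypedAxiom Sg p)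
    (σd : ℕ → Expr) (hσd : MValuation V σd)
    (e a b t : Expr)
    (he : ExprOver V e) (ha : ExprOver V a) (hb : ExprOver V b)
    (ht : TermOver V t) :
    (MDen P σd e t ↔ GORC P (Stm.red (Expr.subst σd e) t)) ∧
    ((∀ s, MDen P σd t s → MDen P σd e s) ↔
        GORC P (Stm.red (Expr.subst σd e) (Expr.subst σd t))) ∧
    ((∃ s, TermOver V s ∧ MaxClass P V s ∧ MDen P σd a s ∧ MDen P σd b s) ↔
        GORC P (Stm.join (Expr.subst σd a) (Expr.subst σd b))) :=
  characterization_lemma_general P V hsr σd hσd e a b t ht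

end ACRWL
end

section
/- Freeness of the term model: Let P = ⟨Σ, C, R⟩ be a program with C strongly regular and well-typed. Then M_P(V) is freely generated by V in the category of models of P: for every PT-algebra A with A ⊨ P and every valuation η = (η_t, η_d) over A with η_d totally defined (η_d(x) maximal in D^A for all x), there exists a unique homomorphism h = (h_t, h_d) : M_P(V) → A extending η, i.e., such that h_t(α) = η_t(α) for every type variable α of V and h_d([x]) = ⟨η_d(x)⟩ for every data variable x of V. Moreover, if A and η are well-typed, then h is a well-typed homomorphism, i.e., h_d(E^{M_P(V)}(ℓ)) ⊆ E^A(h_t(ℓ)) for every ℓ in the type universe of M_P(V). -/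
namespace ACRWL

/-- A Polymorphically Typed algebra (PT-algebra) over a signature: a poset
data universe with bottom, a type universe, a membership relation whose type
extensions are cones, operations interpreting type constructors, data
constructors (deterministic, valued in principal ideals — represented here by
their generators — monotonic and preserving maximal elements) and defined
function symbols (non-deterministic: monotonic and cone-valued). -/
structure PTAlgebra (Sg : Signature) : Type 1 where
  D : Type
  le : D → D → Prop
  le_refl : ∀ u, le u u
  le_trans : ∀ u v w, le u v → le v w → le u w
  le_antisymm : ∀ u v, le u v → le v u → u = v
  bot : D
  bot_le : ∀ u, le bot u
  T : Type
  mem : D → T → Prop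
  mem_bot : ∀ ℓ, mem bot ℓ
  mem_down : ∀ u v ℓ, le u v → mem v ℓ → mem u ℓ
  tcApp : ℕ → List T → T
  conApp : ℕ → List D → D
  conApp_mono : ∀ (c : ℕ) (us vs : List D), us.length = vs.length →
      (∀ p ∈ us.zip vs, le p.1 p.2) → le (conApp c us) (conApp c vs)
  conApp_max : ∀ (c : ℕ) (us : List D), (∀ u ∈ us, ∀ v, le u v → v = u) →
      ∀ v, le (conApp c us) v → v = conApp c us
  fnApp : ℕ → List D → Set D
  fnApp_bot : ∀ f us, bot ∈ fnApp f us
  fnApp_down : ∀ f us u v, le u v → v ∈ fnApp f us → u ∈ fnApp f us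
  fnApp_mono : ∀ (f : ℕ) (us vs : List D), us.length = vs.length →
      (∀ p ∈ us.zip vs, le p.1 p.2) → fnApp f us ⊆ fnApp f vs

/-- A maximal (totally defined) element of the data universe. -/
def PTAlgebra.Max {Sg : Signature} (A : PTAlgebra Sg) (u : A.D) : Prop :=
  ∀ v, A.le u v → v = u

/-- Denotation of polymorphic types under a type valuation. -/
def tden {Sg : Signature} (A : PTAlgebra Sg) (ηt : ℕ → A.T) : Ty → A.T
  | Ty.tvar α => ηt α
  | Ty.tcon K τs => A.tcApp K (τs.attach.map fun τ => tden A ηt τ.1)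
termination_by τ => sizeOf τ
decreasing_by
  all_goals (simp only [Ty.tcon.sizeOf_spec]; have := List.sizeOf_lt_of_mem τ.2; omega)

/-- Denotation of partial expressions under a data valuation:
`Den A ηd e u` means `u ∈ ⟦e⟧^A ηd`, where `⟦⊥⟧ = {⊥}`, `⟦x⟧ = ⟨ηd x⟩`,
and applications denote the extension of the interpreting operation to cones. -/
inductive Den {Sg : Signature} (A : PTAlgebra Sg) (ηd : ℕ → A.D) : Expr → A.D → Prop where
  | bot : Den A ηd Expr.bot A.bot
  | var {x : ℕ} {u : A.D} : A.le u (ηd x) → Den A ηd (Expr.var x) u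
  | con {c : ℕ} {es : List Expr} {vs : List A.D} {u : A.D} :
      es.length = vs.length →
      (∀ p ∈ es.zip vs, Den A ηd p.1 p.2) →
      A.le u (A.conApp c vs) → Den A ηd (Expr.con c es) u
  | fn {f : ℕ} {es : List Expr} {vs : List A.D} {u : A.D} :
      es.length = vs.length →
      (∀ p ∈ es.zip vs, Den A ηd p.1 p.2) →
      u ∈ A.fnApp f vs → Den A ηd (Expr.fn f es) u

/-- A well-typed PT-algebra: the operations interpreting the declared symbols
respect the (instances of) their declared principal types. -/
def PTAlgebra.WellTyped {Sg : Signature} (A : PTAlgebra Sg) : Prop :=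
  (∀ (c : ℕ) (D : Decl), Sg.dc c = some D → ∀ (ηt : ℕ → A.T) (vs : List A.D),
      vs.length = D.args.length →
      (∀ p ∈ vs.zip D.args, A.mem p.1 (tden A ηt p.2)) →
      ∀ u, A.le u (A.conApp c vs) → A.mem u (tden A ηt D.res)) ∧
  (∀ (f : ℕ) (D : Decl), Sg.fs f = some D → ∀ (ηt : ℕ → A.T) (vs : List A.D),
      vs.length = D.args.length →
      (∀ p ∈ vs.zip D.args, A.mem p.1 (tden A ηt p.2)) →
      ∀ u ∈ A.fnApp f vs, A.mem u (tden A ηt D.res))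

/-- A valuation well-typed w.r.t. an environment. -/
def WellTypedVal {Sg : Signature} (A : PTAlgebra Sg) (V : Env)
    (ηt : ℕ → A.T) (ηd : ℕ → A.D) : Prop :=
  ∀ x τ, V x = some τ → A.mem (ηd x) (tden A ηt τ)

end ACRWL

namespace ACRWL

/-- A PT-algebra satisfies `a == b` under the data valuation `ηd`:
the denotations share a maximal (totally defined) element. -/
def JoinSat {Sg : Signature} (A : PTAlgebra Sg) (ηd : ℕ → A.D) (a b : Expr) : Prop :=
  ∃ u, Den A ηd a u ∧ Den A ηd b u ∧ A.Max u

/-- A PT-algebra satisfies `e → e'` under `ηd`: `⟦e'⟧ ⊆ ⟦e⟧`. -/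
def RedSat {Sg : Signature} (A : PTAlgebra Sg) (ηd : ℕ → A.D) (e e' : Expr) : Prop :=
  ∀ u, Den A ηd e' u → Den A ηd e u

/-- A PT-algebra satisfies a defining rule. -/
def SatRule {Sg : Signature} (A : PTAlgebra Sg) (ρ : Rule) : Prop :=
  ∀ ηd : ℕ → A.D, (∀ p ∈ ρ.conds, JoinSat A ηd p.1 p.2) →
    RedSat A ηd (Expr.fn ρ.fname ρ.lhs) ρ.rhs

/-- The data valuation `ηd` is safe for `t`: variables with more than one
occurrence in `t` get maximal (totally defined) values. -/
def SafeVal {Sg : Signature} (A : PTAlgebra Sg) (ηd : ℕ → A.D) (t : Expr) : Prop :=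
  ∀ x, 2 ≤ Expr.varCount x t → A.Max (ηd x)

/-- A PT-algebra satisfies an equational axiom `s ≈ t`. -/
def SatAxiom {Sg : Signature} (A : PTAlgebra Sg) (p : Expr × Expr) : Prop :=
  ∀ ηd : ℕ → A.D,
    (SafeVal A ηd p.1 → RedSat A ηd p.1 p.2) ∧
    (SafeVal A ηd p.2 → RedSat A ηd p.2 p.1)

/-- A PT-algebra is a model of the program `P`. -/
def Models {Sg : Signature} (A : PTAlgebra Sg) (P : Program) : Prop :=
  (∀ ρ ∈ P.R, SatRule A ρ) ∧ (∀ p ∈ P.C, SatAxiom A p)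

end ACRWL

namespace ACRWL

/-- The set of type variables occurring in an environment. -/
def EnvTVars (V : Env) : Set ℕ :=
  {α | ∃ x τ, V x = some τ ∧ Ty.OccursT α τ}

/-- A type over the set `AT` of type variables. -/
def TyOver (AT : Set ℕ) (τ : Ty) : Prop := ∀ α, Ty.OccursT α τ → α ∈ AT

/-- A homomorphism from the term model `M_P(V)` to the PT-algebra `A`,
given by a type mapping `ht` and a data mapping `hd` on representatives:
`hd` is well defined on `≈_C`-classes, monotonic, element-valued (it is
presented by the generator of the principal ideal it returns), strict,
preserves type constructors and data constructors, and loosely preserves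
defined functions. -/
structure MHom (Sg : Signature) (P : Program) (V : Env) (A : PTAlgebra Sg)
    (ht : Ty → A.T) (hd : Expr → A.D) : Prop where
  wd : ∀ s t, TermOver V s → TermOver V t → EqC P.C s t → hd s = hd t
  mono : ∀ s t, TermOver V s → TermOver V t → Geq P.C s t → A.le (hd t) (hd s)
  tconP : ∀ (K : ℕ) (τs : List Ty), ht (Ty.tcon K τs) = A.tcApp K (τs.map ht)
  strict : hd Expr.bot = A.bot
  conP : ∀ (c : ℕ) (ts : List Expr), (∀ t ∈ ts, TermOver V t) →
      hd (Expr.con c ts) = A.conApp c (ts.map hd)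
  fnP : ∀ (f : ℕ) (ts : List Expr) (t : Expr),
      (∀ s ∈ ts, TermOver V s) → TermOver V t →
      GORC P (Stm.red (Expr.fn f ts) t) →
      ∀ v, A.le v (hd t) → v ∈ A.fnApp f (ts.map hd)


open Expr

theorem forall_zip {α β : Type*} {R : α × β → Prop} {l₁ : List α} {l₂ : List β} :
    (∀ p ∈ l₁.zip l₂, R p) ↔
      ∀ (i : ℕ) (h1 : i < l₁.length) (h2 : i < l₂.length), R (l₁[i], l₂[i]) := by
  constructor
  · intro h i h1 h2
    refine h _ ?_
    rw [List.mem_iff_getElem]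
    exact ⟨i, by simp [List.length_zip]; omega, by rw [List.getElem_zip]⟩
  · intro h p hp
    obtain ⟨i, hi, he⟩ := List.mem_iff_getElem.1 hp
    rw [List.getElem_zip] at he
    subst he
    simp [List.length_zip] at hi
    exact h i hi.1 hi.2

theorem subst_var (σ : ℕ → Expr) (x : ℕ) : (var x).subst σ = σ x := by rw [Expr.subst]

theorem subst_bot (σ : ℕ → Expr) : Expr.bot.subst σ = Expr.bot := by rw [Expr.subst]

theorem subst_con (σ : ℕ → Expr) (c : ℕ) (es : List Expr) :
    (con c es).subst σ = con c (es.map (Expr.subst σ)) := by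
  rw [Expr.subst]; simp

theorem subst_fn (σ : ℕ → Expr) (f : ℕ) (es : List Expr) :
    (fn f es).subst σ = fn f (es.map (Expr.subst σ)) := by
  rw [Expr.subst]; simp

variable {Sg : Signature}

/-- Generator-valued evaluation of expressions (functions mapped to ⊥). -/
def tval (A : PTAlgebra Sg) (μ : ℕ → A.D) : Expr → A.D
  | .var x => μ x
  | .bot => A.bot
  | .con c es => A.conApp c (es.attach.map fun e => tval A μ e.1)
  | .fn _ _ => A.bot
termination_by e => sizeOf e
decreasing_by
  all_goals (simp only [Expr.con.sizeOf_spec]; have := List.sizeOf_lt_of_mem e.2; omega)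

theorem tval_var (A : PTAlgebra Sg) (μ : ℕ → A.D) (x : ℕ) : tval A μ (var x) = μ x := by
  rw [tval]

theorem tval_bot (A : PTAlgebra Sg) (μ : ℕ → A.D) : tval A μ Expr.bot = A.bot := by
  rw [tval]

theorem tval_fn (A : PTAlgebra Sg) (μ : ℕ → A.D) (f : ℕ) (es : List Expr) :
    tval A μ (fn f es) = A.bot := by rw [tval]

theorem tval_con (A : PTAlgebra Sg) (μ : ℕ → A.D) (c : ℕ) (es : List Expr) :
    tval A μ (con c es) = A.conApp c (es.map (tval A μ)) := by
  rw [tval]; simp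

theorem tden_tvar (A : PTAlgebra Sg) (ηt : ℕ → A.T) (α : ℕ) :
    tden A ηt (Ty.tvar α) = ηt α := by rw [tden]

theorem tden_tcon (A : PTAlgebra Sg) (ηt : ℕ → A.T) (K : ℕ) (τs : List Ty) :
    tden A ηt (Ty.tcon K τs) = A.tcApp K (τs.map (tden A ηt)) := by
  rw [tden]; simp

theorem tden_subst (A : PTAlgebra Sg) (ηt : ℕ → A.T) (σt : ℕ → Ty) :
    ∀ τ : Ty, tden A ηt (τ.subst σt) = tden A (fun α => tden A ηt (σt α)) τ
  | .tvar α => by rw [Ty.subst, tden_tvar]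
  | .tcon K τs => by
      rw [Ty.subst, tden_tcon, tden_tcon]
      simp only [List.map_map, List.map_subtype, List.unattach_attach]
      congr 1
      apply List.map_congr_left
      intro a ha
      exact tden_subst A ηt σt a
termination_by τ => sizeOf τ
decreasing_by
  simp only [Ty.tcon.sizeOf_spec]; have := List.sizeOf_lt_of_mem ha; omega

theorem isTerm_subst {σ : ℕ → Expr} (hσ : TermSub σ) : ∀ {t : Expr}, t.IsTerm → (t.subst σ).IsTerm := by
  intro t h
  induction h with
  | var x => rw [subst_var]; exact hσ x
  | bot => rw [subst_bot]; exact .bot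
  | con h ih =>
      rw [subst_con]
      refine .con ?_
      intro e he
      rw [List.mem_map] at he
      obtain ⟨a, ha, rfl⟩ := he
      exact ih a ha

theorem max_tval (A : PTAlgebra Sg) (μ : ℕ → A.D) (htot : ∀ x, A.Max (μ x)) :
    ∀ {t : Expr}, t.IsTerm → t.NoBot → A.Max (tval A μ t) := by
  intro t h
  induction h with
  | var x => intro _; rw [tval_var]; exact htot x
  | bot => intro hnb; cases hnb
  | con h ih =>
      intro hnb
      cases hnb with
      | con hnb' =>
        rw [tval_con]
        refine A.conApp_max _ _ ?_
        intro u hu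
        rw [List.mem_map] at hu
        obtain ⟨a, ha, rfl⟩ := hu
        exact ih a ha (hnb' a ha)
theorem den_le {A : PTAlgebra Sg} {μ : ℕ → A.D} {e : Expr} {u v : A.D}
    (h : Den A μ e u) (hv : A.le v u) : Den A μ e v := by
  cases h with
  | bot =>
      have : v = A.bot := A.le_antisymm _ _ hv (A.bot_le v)
      rw [this]; exact .bot
  | var h => exact .var (A.le_trans _ _ _ hv h)
  | con hlen hall hle => exact .con hlen hall (A.le_trans _ _ _ hv hle)
  | fn hlen hall hmem => exact .fn hlen hall (A.fnApp_down _ _ _ _ hv hmem)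

theorem den_bot (A : PTAlgebra Sg) (μ : ℕ → A.D) : ∀ e : Expr, Den A μ e A.bot
  | .var x => .var (A.bot_le _)
  | .bot => .bot
  | .con c es =>
      .con (vs := es.map fun _ => A.bot) (by simp)
        (by
          rw [forall_zip]
          intro i h1 h2
          simp only [List.getElem_map]
          have hm : es[i] ∈ es := List.getElem_mem h1
          exact den_bot A μ es[i])
        (A.bot_le _)
  | .fn f es =>
      .fn (vs := es.map fun _ => A.bot) (by simp)
        (by
          rw [forall_zip]
          intro i h1 h2
          simp only [List.getElem_map]
          have hm : es[i] ∈ es := List.getElem_mem h1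
          exact den_bot A μ es[i])
        (A.fnApp_bot _ _)
termination_by e => sizeOf e
decreasing_by
  all_goals (simp only [Expr.con.sizeOf_spec, Expr.fn.sizeOf_spec]; have := List.sizeOf_lt_of_mem hm; omega)

theorem den_tval {A : PTAlgebra Sg} {μ : ℕ → A.D} {t : Expr} (h : t.IsTerm) :
    Den A μ t (tval A μ t) := by
  induction h with
  | var x => rw [tval_var]; exact .var (A.le_refl _)
  | bot => rw [tval_bot]; exact .bot
  | @con c es h ih =>
      rw [tval_con]
      refine .con (vs := es.map (tval A μ)) (by simp) ?_ (A.le_refl _)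
      rw [forall_zip]
      intro i h1 h2
      simp only [List.getElem_map]
      exact ih _ (List.getElem_mem h1)

theorem den_term_le {A : PTAlgebra Sg} {μ : ℕ → A.D} {t : Expr} {u : A.D}
    (h : Den A μ t u) : t.IsTerm → A.le u (tval A μ t) := by
  induction h with
  | bot => intro _; rw [tval_bot]; exact A.le_refl _
  | @var x u h => intro _; rw [tval_var]; exact h
  | @con c es vs u hlen hall hle ih =>
      intro ht
      cases ht with
      | con hts =>
        rw [tval_con]
        refine A.le_trans _ _ _ hle (A.conApp_mono _ _ _ (by simp [hlen]) ?_)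
        rw [forall_zip]
        intro i h1 h2
        simp only [List.getElem_map]
        have hm : (es[i]'(by omega), vs[i]'h1) ∈ es.zip vs := by
          rw [List.mem_iff_getElem]
          exact ⟨i, by simp [List.length_zip]; omega, by rw [List.getElem_zip]⟩
        exact ih _ hm (hts _ (List.getElem_mem _))
  | fn _ _ _ => intro ht; cases ht
theorem cinst_terms {P : Program} {a b : Expr} (h : (a, b) ∈ CInstances P.C) :
    a.IsTerm ∧ b.IsTerm := by
  obtain ⟨p, hp, σ, hσ, hc⟩ := h
  have wf := P.wfC.2 p hp
  rcases hc with ⟨_, heq⟩ | ⟨_, heq⟩ <;>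
    · injection heq with h1 h2
      subst h1; subst h2
      exact ⟨isTerm_subst hσ (by first | exact wf.1.1 | exact wf.2.1),
             isTerm_subst hσ (by first | exact wf.2.1 | exact wf.1.1)⟩

theorem tval_subst (A : PTAlgebra Sg) (μ : ℕ → A.D) (σ : ℕ → Expr) :
    ∀ e : Expr, tval A μ (e.subst σ) = tval A (fun x => tval A μ (σ x)) e
  | .var x => by rw [subst_var, tval_var]
  | .bot => by rw [subst_bot, tval_bot, tval_bot]
  | .con c es => by
      rw [subst_con, tval_con, tval_con, List.map_map]
      congr 1
      apply List.map_congr_left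
      intro a ha
      exact tval_subst A μ σ a
  | .fn f es => by rw [subst_fn, tval_fn, tval_fn]
termination_by e => sizeOf e
decreasing_by
  simp only [Expr.con.sizeOf_spec]; have := List.sizeOf_lt_of_mem ha; omega

theorem geq_sound {P : Program} {A : PTAlgebra Sg} {ηd : ℕ → A.D}
    (htot : ∀ x, A.Max (ηd x)) (hax : ∀ p ∈ P.C, SatAxiom A p)
    {s t : Expr} (h : Geq P.C s t) : A.le (tval A ηd t) (tval A ηd s) := by
  have ax_side : ∀ (a b : Expr) (σ : ℕ → Expr), TermSub σ → SafeSub σ a →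
      a.IsTerm → b.IsTerm →
      (SafeVal A (fun x => tval A ηd (σ x)) a →
        RedSat A (fun x => tval A ηd (σ x)) a b) →
      A.le (tval A ηd (b.subst σ)) (tval A ηd (a.subst σ)) := by
    intro a b σ hσ hsafe ha hb hred
    have hsv : SafeVal A (fun x => tval A ηd (σ x)) a := by
      intro x hx
      exact max_tval A ηd htot (hsafe x hx).1 (hsafe x hx).2
    have h1 : Den A (fun x => tval A ηd (σ x)) b (tval A (fun x => tval A ηd (σ x)) b) :=
      den_tval hb
    have h2 := hred hsv _ h1
    have h3 := den_term_le h2 ha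
    rw [tval_subst, tval_subst]
    exact h3
  induction h with
  | bot ht => rw [tval_bot]; exact A.bot_le _
  | refl ht => exact A.le_refl _
  | trans h1 h2 ih1 ih2 => exact A.le_trans _ _ _ ih2 ih1
  | @mono c ts ss hlen hall ih =>
      rw [tval_con, tval_con]
      refine A.conApp_mono _ _ _ (by simp [hlen]) ?_
      rw [forall_zip]
      intro i h1 h2
      simp only [List.getElem_map]
      have hm : (ts[i]'(by simpa using h2), ss[i]'(by simpa using h1)) ∈ ts.zip ss := by
        rw [List.mem_iff_getElem]
        refine ⟨i, by simp [List.length_zip] at *; omega, by rw [List.getElem_zip]⟩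
      exact ih _ hm
  | @ax s t hmem =>
      obtain ⟨p, hp, σ, hσ, hcase⟩ := hmem
      have wf := P.wfC.2 p hp
      rcases hcase with ⟨hsafe, heq⟩ | ⟨hsafe, heq⟩ <;> injection heq with e1 e2 <;> subst e1 <;> subst e2
      · exact ax_side p.1 p.2 σ hσ hsafe wf.1.1 wf.2.1 (fun hs => (hax p hp _).1 hs)
      · exact ax_side p.2 p.1 σ hσ hsafe wf.2.1 wf.1.1 (fun hs => (hax p hp _).2 hs)
theorem den_con_inv {A : PTAlgebra Sg} {μ : ℕ → A.D} {c : ℕ} {es : List Expr} {u : A.D}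
    (h : Den A μ (Expr.con c es) u) :
    ∃ vs : List A.D, es.length = vs.length ∧ (∀ p ∈ es.zip vs, Den A μ p.1 p.2) ∧
      A.le u (A.conApp c vs) := by
  cases h with
  | con hlen hall hle => exact ⟨_, hlen, hall, hle⟩

theorem den_fn_inv {A : PTAlgebra Sg} {μ : ℕ → A.D} {f : ℕ} {es : List Expr} {u : A.D}
    (h : Den A μ (Expr.fn f es) u) :
    ∃ vs : List A.D, es.length = vs.length ∧ (∀ p ∈ es.zip vs, Den A μ p.1 p.2) ∧
      u ∈ A.fnApp f vs := by
  cases h with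
  | fn hlen hall hmem => exact ⟨_, hlen, hall, hmem⟩

theorem mem_zip_of_lt {α β : Type*} {l₁ : List α} {l₂ : List β} {i : ℕ}
    (h1 : i < l₁.length) (h2 : i < l₂.length) : (l₁[i], l₂[i]) ∈ l₁.zip l₂ := by
  rw [List.mem_iff_getElem]
  exact ⟨i, by simp [List.length_zip]; omega, by rw [List.getElem_zip]⟩

theorem den_subst (A : PTAlgebra Sg) (ηd : ℕ → A.D) {σ : ℕ → Expr} (hσ : TermSub σ) :
    ∀ (e : Expr) (u : A.D),
      Den A ηd (e.subst σ) u ↔ Den A (fun x => tval A ηd (σ x)) e u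
  | .var x, u => by
      rw [subst_var]
      constructor
      · intro h
        exact .var (den_term_le h (hσ x))
      · intro h
        cases h with
        | var h => exact den_le (den_tval (hσ x)) h
  | .bot, u => by
      rw [subst_bot]
      constructor
      · intro h; cases h; exact .bot
      · intro h; cases h; exact .bot
  | .con c es, u => by
      rw [subst_con]
      constructor
      · intro h
        obtain ⟨vs, hlen, hall, hle⟩ := den_con_inv h
        refine .con (vs := vs) (by simpa using hlen) ?_ hle
        rw [forall_zip] at hall ⊢
        intro i h1 h2
        have hm : es[i] ∈ es := List.getElem_mem h1
        have := hall i (by simpa using h1) h2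
        simp only [List.getElem_map] at this
        exact (den_subst A ηd hσ es[i] _).1 this
      · intro h
        obtain ⟨vs, hlen, hall, hle⟩ := den_con_inv h
        refine .con (vs := vs) (by simpa using hlen) ?_ hle
        rw [forall_zip] at hall ⊢
        intro i h1 h2
        simp only [List.getElem_map]
        have h1' : i < es.length := by simpa using h1
        have hm : es[i] ∈ es := List.getElem_mem h1'
        exact (den_subst A ηd hσ es[i] _).2 (hall i h1' h2)
  | .fn f es, u => by
      rw [subst_fn]
      constructor
      · intro h
        obtain ⟨vs, hlen, hall, hmem⟩ := den_fn_inv h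
        refine .fn (vs := vs) (by simpa using hlen) ?_ hmem
        rw [forall_zip] at hall ⊢
        intro i h1 h2
        have hm : es[i] ∈ es := List.getElem_mem h1
        have := hall i (by simpa using h1) h2
        simp only [List.getElem_map] at this
        exact (den_subst A ηd hσ es[i] _).1 this
      · intro h
        obtain ⟨vs, hlen, hall, hmem⟩ := den_fn_inv h
        refine .fn (vs := vs) (by simpa using hlen) ?_ hmem
        rw [forall_zip] at hall ⊢
        intro i h1 h2
        simp only [List.getElem_map]
        have h1' : i < es.length := by simpa using h1
        have hm : es[i] ∈ es := List.getElem_mem h1'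
        exact (den_subst A ηd hσ es[i] _).2 (hall i h1' h2)
termination_by e => sizeOf e
decreasing_by
  all_goals (simp only [Expr.con.sizeOf_spec, Expr.fn.sizeOf_spec]; have := List.sizeOf_lt_of_mem hm; omega)

/-- Statement-level satisfaction. -/
def StmSat (A : PTAlgebra Sg) (ηd : ℕ → A.D) : Stm → Prop
  | .red e e' => RedSat A ηd e e'
  | .join a b => JoinSat A ηd a b

theorem gorc_sound {P : Program} {A : PTAlgebra Sg} (hA : Models A P)
    {ηd : ℕ → A.D} (htot : ∀ x, A.Max (ηd x)) :
    ∀ {st : Stm}, GORC P st → StmSat A ηd st := by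
  intro st h
  induction h with
  | bot e =>
      intro u hu
      cases hu
      exact den_bot A ηd e
  | rrefl x => intro u hu; exact hu
  | @dc c es ts hlen hall ih =>
      intro u hu
      obtain ⟨vs, hlen2, hall2, hle⟩ := den_con_inv hu
      refine .con (vs := vs) (by omega) ?_ hle
      rw [forall_zip] at hall2 ⊢
      intro i h1 h2
      exact ih _ (mem_zip_of_lt h1 (by omega)) _ (hall2 i (by omega) h2)
  | @omut c es ts s t hne hcin hlen hall hst ihall ihst =>
      intro u hu
      have h1 : Den A ηd s u := ihst u hu
      have hterm := cinst_terms hcin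
      have hts : ∀ e ∈ ts, e.IsTerm := by
        cases hterm.1 with | con h => exact h
      have h2 : A.le u (tval A ηd s) := den_term_le h1 hterm.2
      have h3 : A.le (tval A ηd s) (tval A ηd (Expr.con c ts)) :=
        geq_sound htot hA.2 (Geq.ax hcin)
      rw [tval_con] at h3
      refine .con (vs := ts.map (tval A ηd)) (by simp [hlen]) ?_ (A.le_trans _ _ _ h2 h3)
      rw [forall_zip]
      intro i h1' h2'
      simp only [List.getElem_map]
      exact ihall _ (mem_zip_of_lt h1' (by omega)) _
        (den_tval (hts _ (List.getElem_mem _)))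
  | @orule es ρ t hne hri hlen hall hconds hrhs ihall ihconds ihrhs =>
      obtain ⟨ρ₀, hρ₀, σ, hσ, rfl⟩ := hri
      intro u hu
      have hconds' : ∀ p ∈ ρ₀.conds, JoinSat A (fun x => tval A ηd (σ x)) p.1 p.2 := by
        intro p hp
        have hm : (p.1.subst σ, p.2.subst σ) ∈ (ρ₀.subst σ).conds :=
          List.mem_map.2 ⟨p, hp, rfl⟩
        obtain ⟨w, hw1, hw2, hwm⟩ := ihconds _ hm
        exact ⟨w, (den_subst A ηd hσ p.1 w).1 hw1, (den_subst A ηd hσ p.2 w).1 hw2, hwm⟩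
      have hsat := hA.1 ρ₀ hρ₀ (fun x => tval A ηd (σ x)) hconds'
      have h1 : Den A ηd (ρ₀.rhs.subst σ) u := ihrhs u hu
      have h2 := (den_subst A ηd hσ ρ₀.rhs u).1 h1
      have h3 := hsat u h2
      obtain ⟨vs, hlen2, hall2, hmem⟩ := den_fn_inv h3
      have hlhslen : (ρ₀.subst σ).lhs.length = ρ₀.lhs.length := by
        simp [Rule.subst]
      refine .fn (vs := vs) (by omega) ?_ hmem
      rw [forall_zip] at hall2 ⊢
      intro i h1' h2'
      have hilhs : i < ρ₀.lhs.length := by omega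
      have hd0 := (den_subst A ηd hσ (ρ₀.lhs[i]) _).2 (hall2 i hilhs h2')
      refine ihall _ (mem_zip_of_lt h1' (by omega : i < (ρ₀.subst σ).lhs.length)) _ ?_
      show Den A ηd ((ρ₀.lhs.map (Expr.subst σ))[i]'(by
        simpa using (by omega : i < ρ₀.lhs.length))) vs[i]
      simpa only [List.getElem_map] using hd0
  | @join e e' t htt hr1 hr2 ih1 ih2 =>
      exact ⟨tval A ηd t, ih1 _ (den_tval htt.1), ih2 _ (den_tval htt.1),
        max_tval A ηd htot htt.1 htt.2⟩
theorem ty_unique {A : PTAlgebra Sg} {V : Env} {ηt : ℕ → A.T} {ht' : Ty → A.T}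
    (hhomT : ∀ (K : ℕ) (τs : List Ty), ht' (Ty.tcon K τs) = A.tcApp K (τs.map ht'))
    (hv : ∀ α ∈ EnvTVars V, ht' (Ty.tvar α) = ηt α) :
    ∀ τ : Ty, TyOver (EnvTVars V) τ → ht' τ = tden A ηt τ
  | .tvar α => by
      intro h
      rw [hv α (h α .tvar), tden_tvar]
  | .tcon K τs => by
      intro h
      rw [hhomT, tden_tcon]
      congr 1
      apply List.map_congr_left
      intro a ha
      exact ty_unique hhomT hv a (fun α hocc => h α (.tcon ha hocc))
termination_by τ => sizeOf τ
decreasing_by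
  simp only [Ty.tcon.sizeOf_spec]; have := List.sizeOf_lt_of_mem ha; omega

theorem tm_unique {Sg : Signature} {P : Program} {V : Env} {A : PTAlgebra Sg}
    {ηd : ℕ → A.D} {ht' : Ty → A.T} {hd' : Expr → A.D}
    (hhom : MHom Sg P V A ht' hd')
    (hx : ∀ x : ℕ, (V x).isSome → hd' (Expr.var x) = ηd x) :
    ∀ t : Expr, TermOver V t → hd' t = tval A ηd t
  | .var x => by
      intro h
      rw [hx x (h.2 x .var), tval_var]
  | .bot => by
      intro h
      rw [hhom.strict, tval_bot]
  | .con c ts => by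
      intro h
      have hts : ∀ s ∈ ts, TermOver V s := by
        intro s hs
        refine ⟨?_, fun x hx' => h.2 x (.con hs hx')⟩
        cases h.1 with | con h' => exact h' s hs
      rw [hhom.conP c ts hts, tval_con]
      congr 1
      apply List.map_congr_left
      intro a ha
      exact tm_unique hhom hx a (hts a ha)
  | .fn f es => by
      intro h
      exact absurd h.1 (by intro h'; cases h')
termination_by t => sizeOf t
decreasing_by
  simp only [Expr.con.sizeOf_spec]; have := List.sizeOf_lt_of_mem ha; omega

theorem wt_sound {Sg : Signature} {V : Env} {A : PTAlgebra Sg}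
    {ηt : ℕ → A.T} {ηd : ℕ → A.D}
    (hwtA : A.WellTyped) (hwtV : WellTypedVal A V ηt ηd) :
    ∀ {t : Expr} {τ : Ty}, HasType Sg V t τ → TermOver V t →
      ∀ v, A.le v (tval A ηd t) → A.mem v (tden A ηt τ) := by
  intro t τ h
  induction h with
  | @var x τ hVx =>
      intro hto v hv
      rw [tval_var] at hv
      exact A.mem_down _ _ _ hv (hwtV _ _ hVx)
  | bot τ =>
      intro hto v hv
      rw [tval_bot] at hv
      have : v = A.bot := A.le_antisymm _ _ hv (A.bot_le v)
      rw [this]; exact A.mem_bot _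
  | @con c es d σt hdc hlen hall ih =>
      intro hto v hv
      have hes : ∀ e ∈ es, TermOver V e := by
        intro e he
        refine ⟨?_, fun x hx' => hto.2 x (.con he hx')⟩
        cases hto.1 with | con h' => exact h' e he
      have hmem : ∀ p ∈ (es.map (tval A ηd)).zip d.args,
          A.mem p.1 (tden A (fun α => tden A ηt (σt α)) p.2) := by
        rw [forall_zip]
        intro i h1 h2
        simp only [List.getElem_map]
        have h1' : i < es.length := by simpa using h1
        have := ih _ (mem_zip_of_lt h1' h2) (hes _ (List.getElem_mem h1'))
          (tval A ηd es[i]) (A.le_refl _)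
        rwa [tden_subst] at this
      have := hwtA.1 c d hdc (fun α => tden A ηt (σt α)) (es.map (tval A ηd))
        (by simp [hlen]) hmem v (by rw [tval_con] at hv; exact hv)
      rwa [← tden_subst] at this
  | @fn f es d σt hf hlen hall ih =>
      intro hto v hv
      exact absurd hto.1 (by intro h'; cases h')

/-- Theorem 5.8 (`M_P(V)` is free): let `P` be a program whose set of
equational axioms is strongly regular and well-typed.  Then `M_P(V)` is
freely generated by `V` in the category of models of `P`: for every model
`A ⊨ P` and every valuation `η = (ηt, ηd)` with `ηd` totally defined there
is a unique homomorphism `h : M_P(V) → A` extending `η`; moreover, if `A`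
and `η` are well-typed then `h` is a well-typed homomorphism. -/
theorem term_model_free (Sg : Signature) (P : Program) (V : Env)
    (hsr : StronglyRegular P.C) (hwt : ∀ p ∈ P.C, WellTypedAxiom Sg p)
    (A : PTAlgebra Sg) (hA : Models A P)
    (ηt : ℕ → A.T) (ηd : ℕ → A.D) (htot : ∀ x, A.Max (ηd x)) :
    ∃ (ht : Ty → A.T) (hd : Expr → A.D),
      MHom Sg P V A ht hd ∧
      -- h extends η:
      (∀ α ∈ EnvTVars V, ht (Ty.tvar α) = ηt α) ∧
      (∀ x : ℕ, (V x).isSome → hd (Expr.var x) = ηd x) ∧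
      -- h is unique with these properties:
      (∀ (ht' : Ty → A.T) (hd' : Expr → A.D), MHom Sg P V A ht' hd' →
        (∀ α ∈ EnvTVars V, ht' (Ty.tvar α) = ηt α) →
        (∀ x : ℕ, (V x).isSome → hd' (Expr.var x) = ηd x) →
        (∀ τ : Ty, TyOver (EnvTVars V) τ → ht' τ = ht τ) ∧
        (∀ t : Expr, TermOver V t → hd' t = hd t)) ∧
      -- if A and η are well-typed then h is a well-typed homomorphism:
      (A.WellTyped → WellTypedVal A V ηt ηd →
        ∀ (t : Expr) (τ : Ty), TermOver V t → HasType Sg V t τ →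
          ∀ v, A.le v (hd t) → A.mem v (tden A ηt τ)) := by
  refine ⟨tden A ηt, tval A ηd, ?_, ?_, ?_, ?_, ?_⟩
  · constructor
    · intro s t hs ht h
      exact A.le_antisymm _ _ (geq_sound htot hA.2 h.2) (geq_sound htot hA.2 h.1)
    · intro s t _ _ h
      exact geq_sound htot hA.2 h
    · exact tden_tcon A ηt
    · exact tval_bot A ηd
    · intro c ts _
      exact tval_con A ηd c ts
    · intro f ts t hts ht hg v hv
      have hden : Den A ηd t v := den_le (den_tval ht.1) hv
      have hred := gorc_sound hA htot hg
      obtain ⟨vs, hlen, hall, hmem⟩ := den_fn_inv (hred v hden)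
      refine A.fnApp_mono f vs (ts.map (tval A ηd)) (by simp; omega) ?_ hmem
      rw [forall_zip]
      intro i h1 h2
      simp only [List.getElem_map]
      have h2' : i < ts.length := by simpa using h2
      exact den_term_le (hall _ (mem_zip_of_lt h2' h1)) (hts _ (List.getElem_mem h2')).1
  · intro α _
    exact tden_tvar A ηt α
  · intro x _
    exact tval_var A ηd x
  · intro ht' hd' hhom he1 he2
    exact ⟨fun τ hτ => ty_unique hhom.tconP he1 τ hτ,
           fun t htt => tm_unique hhom he2 t htt⟩
  · intro hwtA hwtV t τ hto hty v hv
    exact wt_sound hwtA hwtV hty hto v hv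

end ACRWL
end
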